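/- arXiv:1004.4371 — 3 statements merged into one kernel-verified Lean document; each statement's English description precedes it below -/
import Mathlib

section
/- Let G(V) be a finite connected network. If S ⊆ V and ε > 0 satisfy R_eff(u,v) ≥ ε for all distinct u,v ∈ S, then there exists a subset S' ⊆ S with |S'| ≥ |S|/2 such that for every v ∈ S', R_eff(v, S∖{v}) ≥ ε/4. -/
open scoped ENNReal

/-- Dirichlet energy of a function on a network. -/
noncomputable def energy {V : Type*} [Fintype V] (c : V → V → ℝ) (f : V → ℝ) : ℝ :=
  (1 / 2) * ∑ x, ∑ y, c x y * (f x - f y) ^ 2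

/-- A network is connected if only constant functions have zero energy. -/
def Connected {V : Type*} [Fintype V] (c : V → V → ℝ) : Prop :=
  ∀ f : V → ℝ, energy c f = 0 → ∀ x y, f x = f y

/-- Effective resistance between two vertex sets, valued in `ℝ≥0∞` (via the Dirichlet
principle for the effective conductance; the resistance to the empty set is `∞`). -/
noncomputable def effResE {V : Type*} [Fintype V] (c : V → V → ℝ) (A B : Set V) : ℝ≥0∞ :=
  (sInf {e : ℝ≥0∞ | ∃ f : V → ℝ,
    (∀ a ∈ A, f a = 1) ∧ (∀ b ∈ B, f b = 0) ∧ e = ENNReal.ofReal (energy c f)})⁻¹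

/-!
For `u ∈ S` let `h u` be the harmonic measure of `u`: the energy minimiser (taking values in
`[0, 1]`) that is `1` at `u` and `0` on the rest of `S`. Its energy is an effective conductance
from `u` to `S \ {u}`, and the pairings `ℓ u v = B(h u, h v)` of the Dirichlet form `B` are the
Laplacian of the network reduced to `S`: row sums vanish and `-ℓ u v ≥ 0` for `u ≠ v`.
Writing `R(u, v)` for the energy of the unit-current potential from `u` to `v`, which dominates
`effResE c {u} {v} ≥ ε`, Foster's identity for the reduced network reads
`∑_{u ≠ v} (-ℓ u v) R(u, v) = 2 (|S| - 1)`. Since `ℓ u u = ∑_{v ≠ u} (-ℓ u v)`, this gives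
`ε ∑_u ℓ u u ≤ 2 |S|`, and by Markov's inequality at most half of the points of `S` have
conductance `ℓ u u` above `4 / ε`.
-/

open Finset

theorem mul_sum_diag_le_neg_sum_mul {ι : Type*} [DecidableEq ι] {s : Finset ι}
    {ℓ ρ : ι → ι → ℝ} {ε : ℝ} (hrow : ∀ u ∈ s, ∑ v ∈ s, ℓ u v = 0)
    (hoff : ∀ u ∈ s, ∀ v ∈ s, u ≠ v → ℓ u v ≤ 0) (hdiag : ∀ u ∈ s, ρ u u = 0)
    (hρ : ∀ u ∈ s, ∀ v ∈ s, u ≠ v → ε ≤ ρ u v) :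
    ε * ∑ u ∈ s, ℓ u u ≤ -∑ u ∈ s, ∑ v ∈ s, ℓ u v * ρ u v := by
  rw [mul_sum, ← sum_neg_distrib]
  refine sum_le_sum fun u hu => ?_
  have hℓ : ℓ u u = ∑ v ∈ s.erase u, -ℓ u v := by
    rw [sum_neg_distrib, eq_neg_iff_add_eq_zero, add_sum_erase s _ hu, hrow u hu]
  rw [← add_sum_erase s _ hu, hdiag u hu, mul_zero, zero_add, ← sum_neg_distrib, hℓ, mul_sum]
  refine sum_le_sum fun v hv => ?_
  obtain ⟨hvu, hvs⟩ := mem_erase.mp hv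
  nlinarith [hoff u hu v hvs hvu.symm, hρ u hu v hvs hvu.symm]

theorem card_le_two_mul_card_filter_le {ι : Type*} {s : Finset ι} {a : ι → ℝ} {ε : ℝ}
    (hε : 0 < ε) (ha : ∀ u ∈ s, 0 ≤ a u) (hsum : ε * ∑ u ∈ s, a u ≤ 2 * s.card) :
    s.card ≤ 2 * (s.filter fun u => a u ≤ 4 / ε).card := by
  set bad := s.filter fun u => ¬a u ≤ 4 / ε
  have hbad : (bad.card : ℝ) * (4 / ε) ≤ ∑ u ∈ s, a u :=
    calc (bad.card : ℝ) * (4 / ε) ≤ ∑ u ∈ bad, a u := by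
          simpa using card_nsmul_le_sum bad a (4 / ε) fun u hu =>
            (not_le.mp (mem_filter.mp hu).2).le
      _ ≤ ∑ u ∈ s, a u :=
          sum_le_sum_of_subset_of_nonneg (filter_subset _ _) fun u hu _ => ha u hu
  have hbad' : 2 * bad.card ≤ s.card := by
    have : (bad.card : ℝ) * 4 ≤ 2 * s.card :=
      calc (bad.card : ℝ) * 4 = ε * ((bad.card : ℝ) * (4 / ε)) := by field_simp
        _ ≤ ε * ∑ u ∈ s, a u := by gcongr
        _ ≤ 2 * s.card := hsum
    exact_mod_cast (by linarith : (2 * bad.card : ℝ) ≤ s.card)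
  have hsplit : (s.filter fun u => a u ≤ 4 / ε).card + bad.card = s.card :=
    card_filter_add_card_filter_not _
  omega

section Network

variable {V : Type*} [Fintype V] {c : V → V → ℝ}

noncomputable def dirichletForm (c : V → V → ℝ) : LinearMap.BilinForm ℝ (V → ℝ) :=
  LinearMap.mk₂ ℝ (fun f g => (1 / 2) * ∑ x, ∑ y, c x y * (f x - f y) * (g x - g y))
    (fun _ _ _ => by
      simp only [Pi.add_apply, mul_sum, ← sum_add_distrib]
      exact sum_congr rfl fun x _ => sum_congr rfl fun y _ => by ring)
    (fun _ _ _ => by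
      simp only [Pi.smul_apply, smul_eq_mul, mul_sum]
      exact sum_congr rfl fun x _ => sum_congr rfl fun y _ => by ring)
    (fun _ _ _ => by
      simp only [Pi.add_apply, mul_sum, ← sum_add_distrib]
      exact sum_congr rfl fun x _ => sum_congr rfl fun y _ => by ring)
    (fun _ _ _ => by
      simp only [Pi.smul_apply, smul_eq_mul, mul_sum]
      exact sum_congr rfl fun x _ => sum_congr rfl fun y _ => by ring)

theorem dirichletForm_apply (f g : V → ℝ) :
    dirichletForm c f g = (1 / 2) * ∑ x, ∑ y, c x y * (f x - f y) * (g x - g y) :=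
  rfl

theorem dirichletForm_self (f : V → ℝ) : dirichletForm c f f = energy c f := by
  simp only [dirichletForm_apply, energy]; congr! 3; ring

theorem dirichletForm_comm (f g : V → ℝ) : dirichletForm c f g = dirichletForm c g f := by
  simp only [dirichletForm_apply]; congr! 3; ring

theorem dirichletForm_const_right (f : V → ℝ) (k : ℝ) :
    dirichletForm c f (fun _ => k) = 0 := by
  simp [dirichletForm_apply]

theorem energy_nonneg (hnn : ∀ x y, 0 ≤ c x y) (f : V → ℝ) : 0 ≤ energy c f := by
  unfold energy
  exact mul_nonneg (by norm_num) <|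
    sum_nonneg fun x _ => sum_nonneg fun y _ => mul_nonneg (hnn x y) (sq_nonneg _)

theorem continuous_energy : Continuous (energy c) := by
  unfold energy; fun_prop

theorem energy_add_smul (f g : V → ℝ) (t : ℝ) :
    energy c (f + t • g) = energy c f + 2 * t * dirichletForm c f g + t ^ 2 * energy c g := by
  simp only [← dirichletForm_self, map_add, map_smul, LinearMap.add_apply, LinearMap.smul_apply,
    smul_eq_mul, dirichletForm_comm g f]
  ring

theorem dirichletForm_sq_le (hnn : ∀ x y, 0 ≤ c x y) (f g : V → ℝ) :
    dirichletForm c f g ^ 2 ≤ energy c f * energy c g := by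
  simpa [sq, dirichletForm_comm g f, dirichletForm_self] using
    (dirichletForm c).apply_mul_apply_le_of_forall_zero_le
      (fun f => (dirichletForm_self f).symm ▸ energy_nonneg hnn f) f g

theorem dirichletForm_eq_zero_of_forall_energy_le {k w : V → ℝ}
    (hmin : ∀ t : ℝ, energy c k ≤ energy c (k + t • w)) : dirichletForm c k w = 0 := by
  have hdisc := discrim_le_zero (a := energy c w) (b := 2 * dirichletForm c k w) (c := 0)
    fun t => by nlinarith [hmin t, energy_add_smul (c := c) k w t]
  rw [discrim] at hdisc
  exact pow_eq_zero_iff two_ne_zero |>.mp (le_antisymm (by nlinarith) (sq_nonneg _))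

theorem energy_projIcc_le (hnn : ∀ x y, 0 ≤ c x y) {m M : ℝ} (hmM : m ≤ M) (f : V → ℝ) :
    energy c (fun x => (Set.projIcc m M hmM (f x) : ℝ)) ≤ energy c f := by
  unfold energy
  refine mul_le_mul_of_nonneg_left (sum_le_sum fun x _ => sum_le_sum fun y _ => ?_) (by norm_num)
  exact mul_le_mul_of_nonneg_left (sq_le_sq.mpr (Set.abs_projIcc_sub_projIcc hmM)) (hnn x y)

def IsHarmonicOff (c : V → V → ℝ) (S : Set V) (h : V → ℝ) : Prop :=
  ∀ w : V → ℝ, (∀ s ∈ S, w s = 0) → dirichletForm c h w = 0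

theorem IsHarmonicOff.dirichletForm_congr {S : Set V} {h g₁ g₂ : V → ℝ}
    (hh : IsHarmonicOff c S h) (hg : ∀ s ∈ S, g₁ s = g₂ s) :
    dirichletForm c h g₁ = dirichletForm c h g₂ := by
  have := hh (g₁ - g₂) fun s hs => sub_eq_zero.mpr (hg s hs)
  rwa [map_sub, sub_eq_zero] at this

theorem exists_isHarmonicOff_extension (hnn : ∀ x y, 0 ≤ c x y) (S : Set V) {m M : ℝ}
    (hmM : m ≤ M) {f : V → ℝ} (hf : ∀ s ∈ S, f s ∈ Set.Icc m M) :
    ∃ h : V → ℝ, (∀ s ∈ S, h s = f s) ∧ (∀ x, h x ∈ Set.Icc m M) ∧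
      IsHarmonicOff c S h := by
  let clamp (g : V → ℝ) : V → ℝ := fun x => Set.projIcc m M hmM (g x)
  set K := Set.Icc (fun _ => m) (fun _ => M) ∩ {h : V → ℝ | ∀ s ∈ S, h s = f s}
  have hclamp (g : V → ℝ) (hg : ∀ s ∈ S, g s = f s) : clamp g ∈ K :=
    ⟨⟨fun x => (Set.projIcc m M hmM _).2.1, fun x => (Set.projIcc m M hmM _).2.2⟩,
      fun s hs => by simp [clamp, hg s hs, Set.projIcc_of_mem hmM (hf s hs)]⟩
  have hK : IsCompact K := by
    refine isCompact_Icc.inter_right ?_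
    simp only [Set.ofPred_forall]
    exact isClosed_biInter fun s _ => isClosed_eq (continuous_apply s) continuous_const
  obtain ⟨h, ⟨hbox, hS⟩, hmin⟩ :=
    hK.exists_isMinOn ⟨_, hclamp f fun _ _ => rfl⟩ continuous_energy.continuousOn
  refine ⟨h, hS, fun x => ⟨hbox.1 x, hbox.2 x⟩,
    fun w hw => dirichletForm_eq_zero_of_forall_energy_le fun t => ?_⟩
  -- clamping `h + t • w` back into `[m, M]` keeps it in `K` and does not increase the energy
  exact (hmin (hclamp (h + t • w) fun s hs => by simp [hw s hs, hS s hs])).trans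
    (energy_projIcc_le hnn hmM _)

def laplacian (c : V → V → ℝ) : (V → ℝ) →ₗ[ℝ] V → ℝ where
  toFun f x := ∑ y, c x y * (f x - f y)
  map_add' f g := by
    ext x
    simp only [Pi.add_apply, ← sum_add_distrib]
    exact sum_congr rfl fun y _ => by ring
  map_smul' r f := by
    ext x
    simp only [Pi.smul_apply, smul_eq_mul, RingHom.id_apply, mul_sum]
    exact sum_congr rfl fun y _ => by ring

theorem laplacian_apply (f : V → ℝ) (x : V) : laplacian c f x = ∑ y, c x y * (f x - f y) :=
  rfl

theorem dirichletForm_eq_sum_mul_laplacian (hsymm : ∀ x y, c x y = c y x) (f g : V → ℝ) :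
    dirichletForm c f g = ∑ x, g x * laplacian c f x := by
  have hswap :
      ∑ x, ∑ y, c x y * (f x - f y) * g y = -∑ x, ∑ y, c x y * (f x - f y) * g x := by
    rw [sum_comm, ← sum_neg_distrib]
    refine sum_congr rfl fun x _ => ?_
    rw [← sum_neg_distrib]
    exact sum_congr rfl fun y _ => by rw [hsymm]; ring
  calc dirichletForm c f g
      = (1 / 2) * (∑ x, ∑ y, c x y * (f x - f y) * g x
          - ∑ x, ∑ y, c x y * (f x - f y) * g y) := by
        simp only [dirichletForm_apply, mul_sub, ← sum_sub_distrib]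
    _ = ∑ x, ∑ y, c x y * (f x - f y) * g x := by rw [hswap]; ring
    _ = ∑ x, g x * laplacian c f x := by
        simp only [laplacian_apply, mul_sum]
        exact sum_congr rfl fun x _ => sum_congr rfl fun y _ => by ring

theorem sum_laplacian (hsymm : ∀ x y, c x y = c y x) (f : V → ℝ) :
    ∑ x, laplacian c f x = 0 := by
  simpa using (dirichletForm_eq_sum_mul_laplacian hsymm f fun _ => 1).symm.trans
    (dirichletForm_const_right f 1)

theorem ker_laplacian_le (hsymm : ∀ x y, c x y = c y x) (hconn : Connected c) :
    LinearMap.ker (laplacian c) ≤ Submodule.span ℝ {fun _ => 1} := by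
  intro f hf
  have hE : energy c f = 0 := by
    rw [← dirichletForm_self, dirichletForm_eq_sum_mul_laplacian hsymm, LinearMap.mem_ker.mp hf]
    simp
  rcases isEmpty_or_nonempty V with hV | ⟨⟨x₀⟩⟩
  · simp [Subsingleton.elim f 0]
  · exact Submodule.mem_span_singleton.mpr
      ⟨f x₀, funext fun x => by simp [hconn f hE x x₀]⟩

theorem exists_laplacian_eq (hsymm : ∀ x y, c x y = c y x) (hconn : Connected c) {b : V → ℝ}
    (hb : ∑ x, b x = 0) : ∃ φ, laplacian c φ = b := by
  classical
  rcases isEmpty_or_nonempty V with hV | ⟨⟨x₀⟩⟩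
  · exact ⟨0, Subsingleton.elim _ _⟩
  let σ : (V → ℝ) →ₗ[ℝ] ℝ := ∑ x, LinearMap.proj x
  have hσ (f : V → ℝ) : σ f = ∑ x, f x := by simp [σ]
  have hle : LinearMap.range (laplacian c) ≤ LinearMap.ker σ := by
    rintro _ ⟨f, rfl⟩
    simp [hσ, sum_laplacian hsymm]
  have hσtop : LinearMap.ker σ ≠ ⊤ := fun htop => by
    have h₁ : Pi.single x₀ (1 : ℝ) ∈ LinearMap.ker σ := htop ▸ Submodule.mem_top
    simp [LinearMap.mem_ker, hσ] at h₁
  have hker : Module.finrank ℝ (LinearMap.ker (laplacian c)) ≤ 1 :=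
    (Submodule.finrank_mono (ker_laplacian_le hsymm hconn)).trans
      ((finrank_span_le_card _).trans (by simp))
  have hrank := LinearMap.finrank_range_add_finrank_ker (laplacian c)
  have hσlt := Submodule.finrank_lt hσtop
  rw [← LinearMap.mem_range, Submodule.eq_of_le_of_finrank_le hle (by omega)]
  exact LinearMap.mem_ker.mpr ((hσ b).trans hb)

theorem exists_potential (hsymm : ∀ x y, c x y = c y x) (hconn : Connected c) (a b : V) :
    ∃ φ : V → ℝ, ∀ g, dirichletForm c φ g = g a - g b := by
  classical
  obtain ⟨φ, hφ⟩ := exists_laplacian_eq hsymm hconn (b := Pi.single a 1 - Pi.single b 1)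
    (by simp [sum_sub_distrib])
  exact ⟨φ, fun g => by
    simp [dirichletForm_eq_sum_mul_laplacian hsymm, hφ, mul_sub, sum_sub_distrib,
      Pi.single_apply]⟩

theorem inv_ofReal_energy_le_effResE {A B : Set V} {f : V → ℝ} (hA : ∀ a ∈ A, f a = 1)
    (hB : ∀ b ∈ B, f b = 0) : (ENNReal.ofReal (energy c f))⁻¹ ≤ effResE c A B :=
  ENNReal.inv_le_inv.mpr (sInf_le ⟨f, hA, hB, rfl⟩)

theorem effResE_le_ofReal {A B : Set V} {r : ℝ} (hr : 0 < r)
    (h : ∀ f : V → ℝ, (∀ a ∈ A, f a = 1) → (∀ b ∈ B, f b = 0) →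
      1 ≤ r * energy c f) :
    effResE c A B ≤ ENNReal.ofReal r := by
  rw [effResE, ← inv_inv (ENNReal.ofReal r), ENNReal.inv_le_inv, ← ENNReal.ofReal_inv_of_pos hr]
  refine le_sInf ?_
  rintro _ ⟨f, hA, hB, rfl⟩
  exact ENNReal.ofReal_le_ofReal ((inv_le_iff_one_le_mul₀' hr).mpr (h f hA hB))

theorem effResE_le_energy_of_potential (hnn : ∀ x y, 0 ≤ c x y) {a b : V} (hab : a ≠ b)
    {φ : V → ℝ} (hφ : ∀ g, dirichletForm c φ g = g a - g b) :
    effResE c {a} {b} ≤ ENNReal.ofReal (energy c φ) := by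
  classical
  have key (f : V → ℝ) (ha : f a = 1) (hb : f b = 0) : 1 ≤ energy c φ * energy c f := by
    simpa [hφ, ha, hb] using dirichletForm_sq_le hnn φ f
  have hpos : 0 < energy c φ := by
    refine (energy_nonneg hnn φ).lt_of_ne fun h => ?_
    have := key (Pi.single a 1) (by simp) (by simp [hab.symm])
    rw [← h, zero_mul] at this
    exact absurd this (by norm_num)
  exact effResE_le_ofReal hpos fun f hA hB => key f (hA a rfl) (hB b rfl)

variable [DecidableEq V]

structure IsHarmonicMeasure (c : V → V → ℝ) (S : Set V) (u : V) (h : V → ℝ) : Prop where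
  eq_single : ∀ x ∈ S, h x = (Pi.single u 1 : V → ℝ) x
  nonneg : ∀ x, 0 ≤ h x
  isHarmonicOff : IsHarmonicOff c S h

theorem exists_isHarmonicMeasure (hnn : ∀ x y, 0 ≤ c x y) (S : Set V) (u : V) :
    ∃ h, IsHarmonicMeasure c S u h := by
  obtain ⟨h, hS, hI, hh⟩ := exists_isHarmonicOff_extension hnn S zero_le_one
    (f := Pi.single u 1) fun x _ => by by_cases hx : x = u <;> simp [hx]
  exact ⟨h, hS, fun x => (hI x).1, hh⟩

theorem IsHarmonicMeasure.inv_ofReal_energy_le_effResE {S : Set V} {u : V} {h : V → ℝ}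
    (hh : IsHarmonicMeasure c S u h) (hu : u ∈ S) :
    (ENNReal.ofReal (energy c h))⁻¹ ≤ effResE c {u} (S \ {u}) :=
  _root_.inv_ofReal_energy_le_effResE (by rintro _ rfl; simp [hh.eq_single _ hu])
    fun x ⟨hxS, hxu⟩ => by simp [hh.eq_single x hxS, Ne.symm hxu]

variable {s : Finset V} {h : V → V → ℝ}

theorem IsHarmonicOff.dirichletForm_eq_sum (hh : ∀ u ∈ s, IsHarmonicMeasure c s u (h u))
    {k : V → ℝ} (hk : IsHarmonicOff c s k) (g : V → ℝ) :
    dirichletForm c k g = ∑ u ∈ s, g u * dirichletForm c k (h u) := by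
  have hg : ∀ x ∈ (s : Set V), g x = (∑ u ∈ s, g u • h u) x := fun x hx => by
    have hterm : ∀ u ∈ s, g u * h u x = g u * (Pi.single u 1 : V → ℝ) x := fun u hu => by
      rw [(hh u hu).eq_single x hx]
    simp only [Finset.sum_apply, Pi.smul_apply, smul_eq_mul, sum_congr rfl hterm]
    simp [Pi.single_apply, Finset.mem_coe.mp hx]
  rw [hk.dirichletForm_congr hg, map_sum]
  simp

theorem sum_dirichletForm_harmonicMeasure (hh : ∀ u ∈ s, IsHarmonicMeasure c s u (h u))
    {u : V} (hu : u ∈ s) : ∑ v ∈ s, dirichletForm c (h u) (h v) = 0 := by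
  simpa using ((hh u hu).isHarmonicOff.dirichletForm_eq_sum hh fun _ => 1).symm.trans
    (dirichletForm_const_right _ 1)

theorem dirichletForm_harmonicMeasure_nonpos (hsymm : ∀ x y, c x y = c y x)
    (hnn : ∀ x y, 0 ≤ c x y) (hh : ∀ u ∈ s, IsHarmonicMeasure c s u (h u)) {u v : V}
    (hu : u ∈ s) (hv : v ∈ s) (huv : u ≠ v) : dirichletForm c (h u) (h v) ≤ 0 := by
  rw [dirichletForm_comm, (hh v hv).isHarmonicOff.dirichletForm_congr (hh u hu).eq_single,
    dirichletForm_eq_sum_mul_laplacian hsymm]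
  have hvu : h v u = 0 := by simp [(hh v hv).eq_single u hu, huv]
  simp only [Pi.single_apply, ite_mul, one_mul, zero_mul, sum_ite_eq', mem_univ, if_true,
    laplacian_apply, hvu, zero_sub]
  exact sum_nonpos fun y _ =>
    mul_nonpos_of_nonneg_of_nonpos (hnn u y) (neg_nonpos.mpr ((hh v hv).nonneg y))

theorem foster_identity (hh : ∀ u ∈ s, IsHarmonicMeasure c s u (h u)) {v₀ : V}
    (hv₀ : v₀ ∈ s) {φ : V → V → ℝ} (hφ : ∀ u g, dirichletForm c (φ u) g = g u - g v₀) :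
    ∑ u ∈ s, ∑ v ∈ s, dirichletForm c (h u) (h v) * energy c (φ u - φ v)
      = -(2 * ((s.card : ℝ) - 1)) := by
  have hE (u v : V) : energy c (φ u - φ v) = (φ u u - φ u v) + (φ v v - φ v u) := by
    simp only [← dirichletForm_self, map_sub, LinearMap.sub_apply, hφ]
    ring
  have hrow (u : V) (hu : u ∈ s) :
      ∑ v ∈ s, dirichletForm c (h u) (h v) * (φ u u - φ u v)
        = (Pi.single u 1 : V → ℝ) v₀ - 1 := by
    have hexp := (hh u hu).isHarmonicOff.dirichletForm_eq_sum hh (φ u)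
    rw [dirichletForm_comm, hφ, (hh u hu).eq_single u hu, (hh u hu).eq_single v₀ hv₀,
      Pi.single_eq_same] at hexp
    simp only [mul_sub, sum_sub_distrib, ← sum_mul, sum_dirichletForm_harmonicMeasure hh hu,
      zero_mul, zero_sub]
    rw [← neg_sub, hexp, sum_congr rfl fun v _ => mul_comm _ _]
  have hswap : ∑ u ∈ s, ∑ v ∈ s, dirichletForm c (h u) (h v) * (φ v v - φ v u)
      = ∑ u ∈ s, ∑ v ∈ s, dirichletForm c (h u) (h v) * (φ u u - φ u v) := by
    rw [sum_comm]
    exact sum_congr rfl fun u _ => sum_congr rfl fun v _ => by rw [dirichletForm_comm]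
  calc ∑ u ∈ s, ∑ v ∈ s, dirichletForm c (h u) (h v) * energy c (φ u - φ v)
      = 2 * ∑ u ∈ s, ∑ v ∈ s, dirichletForm c (h u) (h v) * (φ u u - φ u v) := by
        simp only [hE, mul_add, sum_add_distrib, hswap]
        ring
    _ = 2 * ∑ u ∈ s, ((Pi.single u 1 : V → ℝ) v₀ - 1) := by rw [sum_congr rfl hrow]
    _ = -(2 * ((s.card : ℝ) - 1)) := by
        simp [sum_sub_distrib, Pi.single_apply, hv₀]
        ring

theorem mul_sum_energy_harmonicMeasure_le (hsymm : ∀ x y, c x y = c y x)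
    (hnn : ∀ x y, 0 ≤ c x y) (hh : ∀ u ∈ s, IsHarmonicMeasure c s u (h u)) {v₀ : V}
    (hv₀ : v₀ ∈ s) {φ : V → V → ℝ} (hφ : ∀ u g, dirichletForm c (φ u) g = g u - g v₀)
    {ε : ℝ} (hρ : ∀ u ∈ s, ∀ v ∈ s, u ≠ v → ε ≤ energy c (φ u - φ v)) :
    ε * ∑ u ∈ s, energy c (h u) ≤ 2 * ((s.card : ℝ) - 1) := by
  have h₁ := mul_sum_diag_le_neg_sum_mul (fun u hu => sum_dirichletForm_harmonicMeasure hh hu)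
    (fun u hu v hv => dirichletForm_harmonicMeasure_nonpos hsymm hnn hh hu hv)
    (fun u _ => by simp [energy]) hρ
  rw [foster_identity hh hv₀ hφ, neg_neg] at h₁
  simpa only [dirichletForm_self] using h₁

end Network

/-- If all pairwise effective resistances inside `S ⊆ V` are at least `ε`, then at least half
of the points `v` of `S` satisfy `R_eff(v, S∖{v}) ≥ ε/4`. -/
theorem exists_half_strongly_separated {V : Type*} [Fintype V] [DecidableEq V]
    (c : V → V → ℝ) (hsymm : ∀ a b, c a b = c b a) (hnn : ∀ a b, 0 ≤ c a b)
    (hconn : Connected c)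
    (S : Set V) (ε : ℝ) (hε : 0 < ε)
    (hsep : ∀ u ∈ S, ∀ v ∈ S, u ≠ v → ENNReal.ofReal ε ≤ effResE c {u} {v}) :
    ∃ S' ⊆ S, S.ncard ≤ 2 * S'.ncard ∧
      ∀ v ∈ S', ENNReal.ofReal (ε / 4) ≤ effResE c {v} (S \ {v}) := by
  obtain ⟨s, rfl⟩ := S.toFinite.exists_finset_coe
  rcases s.eq_empty_or_nonempty with rfl | ⟨v₀, hv₀⟩
  · exact ⟨∅, by simp, by simp, by simp⟩
  choose h hh using exists_isHarmonicMeasure hnn (s : Set V)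
  choose φ hφ using fun u => exists_potential hsymm hconn u v₀
  have hρ (u) (hu : u ∈ s) (v) (hv : v ∈ s) (huv : u ≠ v) : ε ≤ energy c (φ u - φ v) :=
    (ENNReal.ofReal_le_ofReal_iff (energy_nonneg hnn _)).mp <| (hsep u hu v hv huv).trans <|
      effResE_le_energy_of_potential hnn huv fun g => by
        rw [map_sub, LinearMap.sub_apply, hφ, hφ]; ring
  have hsum := mul_sum_energy_harmonicMeasure_le hsymm hnn (fun u _ => hh u) hv₀ hφ hρ
  refine ⟨↑(s.filter fun u => energy c (h u) ≤ 4 / ε),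
    coe_subset.mpr (filter_subset _ _), ?_, fun v hv => ?_⟩
  · simpa only [Set.ncard_coe_finset] using card_le_two_mul_card_filter_le hε
      (fun u _ => energy_nonneg hnn _) (hsum.trans (by linarith))
  obtain ⟨hvs, hvE⟩ := mem_filter.mp hv
  calc ENNReal.ofReal (ε / 4) = (ENNReal.ofReal (4 / ε))⁻¹ := by
        rw [← ENNReal.ofReal_inv_of_pos (by positivity), inv_div]
    _ ≤ (ENNReal.ofReal (energy c (h v)))⁻¹ :=
        ENNReal.inv_le_inv.mpr (ENNReal.ofReal_le_ofReal hvE)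
    _ ≤ effResE c {v} (↑s \ {v}) := (hh v).inv_ofReal_energy_le_effResE hvs
end

section
/- Let T be a finite rooted tree with leaf set L, m_u = product of child-degrees along the root-to-u path, and m_{uv} = product of child-degrees along the path from the root to the least common ancestor of u and v. Suppose events {E_v}_{v∈L} on a probability space satisfy: (1) P(E_v) ≥ (1/2)m_v^{−7/8} for all v ∈ L; (2) P(E_u ∩ E_v) ≤ m_{uv}^{1/8}(m_u m_v)^{−7/8} for all u,v ∈ L; and (3) for every leaf u, Σ_{h=0}^{h_u} Π_{i=0}^{h−1} deg↓(f_u(i))^{−7/8} ≤ 2. Then P(⋃_{v∈L} E_v) ≥ 1/8. -/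
open MeasureTheory

/-- A finite rooted tree, encoded by a parent function together with a depth function
that certifies that iterating `parent` leads to the root. -/
structure FiniteRootedTree (α : Type*) where
  root : α
  parent : α → α
  depth : α → ℕ
  depth_root : depth root = 0
  parent_depth : ∀ v, v ≠ root → depth (parent v) + 1 = depth v
  root_of_depth_zero : ∀ v, depth v = 0 → v = root

variable {α : Type*} [Fintype α] [DecidableEq α]

/-- The set of children of a vertex. -/
def FiniteRootedTree.children (T : FiniteRootedTree α) (v : α) : Finset α :=
  Finset.univ.filter fun u => T.parent u = v ∧ u ≠ T.root

/-- The number of children `deg↓(v)` of a vertex. -/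
def FiniteRootedTree.degDown (T : FiniteRootedTree α) (v : α) : ℕ := (T.children v).card

/-- The set of leaves. -/
def FiniteRootedTree.leaves (T : FiniteRootedTree α) : Finset α :=
  Finset.univ.filter fun v => T.children v = ∅

/-- `pathVertex u k` is the vertex `f_u(k)` at depth `k` on the root-to-`u` path. -/
def FiniteRootedTree.pathVertex (T : FiniteRootedTree α) (u : α) (k : ℕ) : α :=
  T.parent^[T.depth u - k] u

/-- The weight `m_u = Π_{k < h_u} deg↓(f_u(k))` of a vertex `u`. -/
def FiniteRootedTree.mweight (T : FiniteRootedTree α) (u : α) : ℕ :=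
  ∏ k ∈ Finset.range (T.depth u), T.degDown (T.pathVertex u k)

/-- The depth `h_{uv}` of the least common ancestor of `u` and `v`. -/
def FiniteRootedTree.lcaDepth (T : FiniteRootedTree α) (u v : α) : ℕ :=
  Nat.findGreatest (fun k => T.pathVertex u k = T.pathVertex v k)
    (min (T.depth u) (T.depth v))

/-- `m_{uv} = Π_{k < h_{uv}} deg↓(f_u(k))`, the weight along the path from the root to the
least common ancestor of `u` and `v`. -/
def FiniteRootedTree.mweightLCA (T : FiniteRootedTree α) (u v : α) : ℕ :=
  ∏ k ∈ Finset.range (T.lcaDepth u v), T.degDown (T.pathVertex u k)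

/-!
Second moment method for `Z = Σ_u m_u^{-1/8} 1_{E_u}`, which vanishes off `S = ⋃_u E_u`, so
`(E Z)² ≤ E Z² · P(S)`. The weights `m_u⁻¹` of the leaves below a vertex `w` add up to `m_w⁻¹`,
since each child of `w` carries `m_w⁻¹ / deg↓(w)`; in particular `Σ_u m_u⁻¹ = 1`, and (1) gives
`E Z ≥ 1/2`. For `E Z²`, fix `u` and group the leaves `v` by the depth `h` of their common ancestor
with `u`: they lie below `f_u(h)`, so by (2) they contribute at most
`m_{f_u(h)}^{1/8} · m_{f_u(h)}⁻¹ = Π_{i<h} deg↓(f_u(i))^{-7/8}`, and (3) gives `E Z² ≤ 2`.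
Hence `P(S) ≥ (1/2)² / 2 = 1/8`.
-/

theorem rpow_neg_one_eighth_mul_rpow_neg_seven_eighths {x : ℝ} (hx : 0 ≤ x) :
    x ^ (-(1 / 8 : ℝ)) * x ^ (-(7 / 8 : ℝ)) = x⁻¹ := by
  rw [← Real.rpow_add' hx (by norm_num)]
  norm_num [Real.rpow_neg_one]

section SecondMoment

variable {Ω ι : Type*} [MeasurableSpace Ω] (μ : Measure Ω) [IsFiniteMeasure μ]

theorem sq_integral_le_integral_sq_mul_measureReal {Z : Ω → ℝ} {S : Set Ω} (hS : MeasurableSet S)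
    (hZ : Integrable Z μ) (hZ2 : Integrable (fun ω => Z ω ^ 2) μ) (hZS : ∀ ω ∉ S, Z ω = 0) :
    (∫ ω, Z ω ∂μ) ^ 2 ≤ (∫ ω, Z ω ^ 2 ∂μ) * μ.real S := by
  -- `0 ≤ ∫ (t 1_S - Z)²` for every `t` since `Z = Z 1_S`; now take the discriminant.
  have hquad : ∀ t : ℝ,
      0 ≤ μ.real S * (t * t) + (-2 * ∫ ω, Z ω ∂μ) * t + ∫ ω, Z ω ^ 2 ∂μ := by
    intro t
    have hpoint : ∀ ω, 0 ≤ t ^ 2 * S.indicator (1 : Ω → ℝ) ω - 2 * t * Z ω + Z ω ^ 2 := by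
      intro ω
      by_cases hω : ω ∈ S
      · rw [Set.indicator_of_mem hω, Pi.one_apply]
        nlinarith [sq_nonneg (t - Z ω)]
      · rw [Set.indicator_of_notMem hω, hZS ω hω]
        simp
    have hS1 : Integrable (S.indicator (1 : Ω → ℝ)) μ := (integrable_const 1).indicator hS
    have h : 0 ≤ ∫ ω, (t ^ 2 * S.indicator (1 : Ω → ℝ) ω - 2 * t * Z ω + Z ω ^ 2) ∂μ :=
      integral_nonneg hpoint
    have hlin : Integrable (fun ω => t ^ 2 * S.indicator (1 : Ω → ℝ) ω - 2 * t * Z ω) μ :=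
      (hS1.const_mul _).sub (hZ.const_mul _)
    rw [integral_add hlin hZ2,
      integral_sub (hS1.const_mul _) (hZ.const_mul _), integral_const_mul, integral_const_mul,
      integral_indicator_one hS] at h
    linarith
  have h := discrim_le_zero hquad
  rw [discrim] at h
  nlinarith

theorem sq_sum_mul_measureReal_le (s : Finset ι) {E : ι → Set Ω} (hE : ∀ i, MeasurableSet (E i))
    (a : ι → ℝ) :
    (∑ i ∈ s, a i * μ.real (E i)) ^ 2 ≤
      (∑ i ∈ s, ∑ j ∈ s, a i * a j * μ.real (E i ∩ E j)) * μ.real (⋃ i ∈ s, E i) := by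
  set Z : Ω → ℝ := fun ω => ∑ i ∈ s, (E i).indicator (fun _ => a i) ω
  have hint : ∀ i, Integrable ((E i).indicator fun _ => a i) μ :=
    fun i => (integrable_const _).indicator (hE i)
  have hint2 : ∀ i j, Integrable ((E i ∩ E j).indicator fun _ => a i * a j) μ :=
    fun i j => (integrable_const _).indicator ((hE i).inter (hE j))
  have hsq : (fun ω => Z ω ^ 2) =
      fun ω => ∑ i ∈ s, ∑ j ∈ s, (E i ∩ E j).indicator (fun _ => a i * a j) ω := by
    funext ω
    simp only [Z, sq, Finset.sum_mul_sum, Set.inter_indicator_mul]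
  have hZ : ∫ ω, Z ω ∂μ = ∑ i ∈ s, a i * μ.real (E i) := by
    rw [integral_finsetSum _ fun i _ => hint i]
    refine Finset.sum_congr rfl fun i _ => ?_
    rw [integral_indicator_const _ (hE i), smul_eq_mul, mul_comm]
  have hZ2 : ∫ ω, Z ω ^ 2 ∂μ = ∑ i ∈ s, ∑ j ∈ s, a i * a j * μ.real (E i ∩ E j) := by
    rw [hsq, integral_finsetSum _ fun i _ => integrable_finsetSum _ fun j _ => hint2 i j]
    refine Finset.sum_congr rfl fun i _ => ?_
    rw [integral_finsetSum _ fun j _ => hint2 i j]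
    refine Finset.sum_congr rfl fun j _ => ?_
    rw [integral_indicator_const _ ((hE i).inter (hE j)), smul_eq_mul, mul_comm]
  rw [← hZ, ← hZ2]
  refine sq_integral_le_integral_sq_mul_measureReal μ
    (Finset.measurableSet_biUnion s fun i _ => hE i) (integrable_finsetSum _ fun i _ => hint i)
    (hsq ▸ integrable_finsetSum _ fun i _ => integrable_finsetSum _ fun j _ => hint2 i j)
    fun ω hω => ?_
  refine Finset.sum_eq_zero fun i hi => Set.indicator_of_notMem (fun hωi => hω ?_) _
  exact Set.mem_biUnion hi hωi

end SecondMoment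

namespace FiniteRootedTree

section Paths

variable {β : Type*} (T : FiniteRootedTree β)

theorem depth_iterate_parent (v : β) {j : ℕ} (hj : j ≤ T.depth v) :
    T.depth (T.parent^[j] v) = T.depth v - j := by
  induction j with
  | zero => simp
  | succ j ih =>
    have ih := ih (by omega)
    have hne : T.parent^[j] v ≠ T.root := by
      intro h
      rw [h, T.depth_root] at ih
      omega
    have := T.parent_depth _ hne
    rw [Function.iterate_succ_apply']
    omega

theorem depth_pathVertex {u : β} {k : ℕ} (hk : k ≤ T.depth u) :
    T.depth (T.pathVertex u k) = k := by
  rw [pathVertex, T.depth_iterate_parent u (Nat.sub_le _ _)]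
  omega

theorem pathVertex_depth (u : β) : T.pathVertex u (T.depth u) = u := by
  simp [pathVertex]

theorem pathVertex_zero (u : β) : T.pathVertex u 0 = T.root :=
  T.root_of_depth_zero _ (T.depth_pathVertex (Nat.zero_le _))

theorem pathVertex_pathVertex {u : β} {h k : ℕ} (hk : k ≤ h) (hh : h ≤ T.depth u) :
    T.pathVertex (T.pathVertex u h) k = T.pathVertex u k := by
  rw [pathVertex, T.depth_pathVertex hh, pathVertex, pathVertex, ← Function.iterate_add_apply]
  congr 1
  omega

theorem parent_pathVertex_succ {u : β} {h : ℕ} (hh : h < T.depth u) :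
    T.parent (T.pathVertex u (h + 1)) = T.pathVertex u h := by
  rw [pathVertex, pathVertex, ← Function.iterate_succ_apply' T.parent]
  congr 1
  omega

end Paths

section LeastCommonAncestor

variable {β : Type*} [DecidableEq β] (T : FiniteRootedTree β)

theorem lcaDepth_le_left (u v : β) : T.lcaDepth u v ≤ T.depth u :=
  (Nat.findGreatest_le _).trans (min_le_left _ _)

theorem lcaDepth_le_right (u v : β) : T.lcaDepth u v ≤ T.depth v :=
  (Nat.findGreatest_le _).trans (min_le_right _ _)

theorem pathVertex_lcaDepth (u v : β) :
    T.pathVertex u (T.lcaDepth u v) = T.pathVertex v (T.lcaDepth u v) :=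
  Nat.findGreatest_spec (P := fun k => T.pathVertex u k = T.pathVertex v k) (Nat.zero_le _)
    (by rw [T.pathVertex_zero, T.pathVertex_zero])

end LeastCommonAncestor

variable (T : FiniteRootedTree α)

theorem mem_children {w c : α} : c ∈ T.children w ↔ T.parent c = w ∧ c ≠ T.root := by
  simp [children]

theorem depth_of_mem_children {w c : α} (hc : c ∈ T.children w) :
    T.depth c = T.depth w + 1 := by
  rw [T.mem_children] at hc
  rw [← T.parent_depth c hc.2, hc.1]

theorem pathVertex_of_mem_children {w c : α} (hc : c ∈ T.children w) :
    T.pathVertex c (T.depth w) = w := by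
  rw [pathVertex, T.depth_of_mem_children hc, Nat.add_sub_cancel_left, Function.iterate_one,
    ((T.mem_children).1 hc).1]

theorem pathVertex_succ_mem_children {u : α} {h : ℕ} (hh : h < T.depth u) :
    T.pathVertex u (h + 1) ∈ T.children (T.pathVertex u h) := by
  refine (T.mem_children).2 ⟨T.parent_pathVertex_succ hh, fun hr => ?_⟩
  have := T.depth_pathVertex (show h + 1 ≤ T.depth u from hh)
  rw [hr, T.depth_root] at this
  omega

theorem degDown_pathVertex_pos {u : α} {k : ℕ} (hk : k < T.depth u) :
    0 < T.degDown (T.pathVertex u k) :=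
  Finset.card_pos.2 ⟨_, T.pathVertex_succ_mem_children hk⟩

theorem mweight_pos (u : α) : 0 < T.mweight u :=
  Finset.prod_pos fun _ hk => T.degDown_pathVertex_pos (Finset.mem_range.1 hk)

theorem mweight_pathVertex {u : α} {h : ℕ} (hh : h ≤ T.depth u) :
    T.mweight (T.pathVertex u h) = ∏ k ∈ Finset.range h, T.degDown (T.pathVertex u k) := by
  rw [mweight, T.depth_pathVertex hh]
  exact Finset.prod_congr rfl fun k hk => by
    rw [T.pathVertex_pathVertex (Finset.mem_range.1 hk).le hh]

theorem mweight_of_mem_children {w c : α} (hc : c ∈ T.children w) :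
    T.mweight c = T.mweight w * T.degDown w := by
  have hd := T.depth_of_mem_children hc
  rw [mweight, hd, Finset.prod_range_succ, ← T.mweight_pathVertex (by omega),
    T.pathVertex_of_mem_children hc]

theorem mweightLCA_eq_mweight_pathVertex (u v : α) :
    T.mweightLCA u v = T.mweight (T.pathVertex u (T.lcaDepth u v)) :=
  (T.mweight_pathVertex (T.lcaDepth_le_left u v)).symm

theorem sum_children_inv_mweight {w : α} (hw : (T.children w).Nonempty) :
    ∑ c ∈ T.children w, (T.mweight c : ℝ)⁻¹ = (T.mweight w : ℝ)⁻¹ := by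
  have hdeg : (0 : ℝ) < T.degDown w := by exact_mod_cast Finset.card_pos.2 hw
  have hm : (0 : ℝ) < T.mweight w := by exact_mod_cast T.mweight_pos w
  rw [Finset.sum_congr rfl fun c hc => by rw [T.mweight_of_mem_children hc], Finset.sum_const,
    nsmul_eq_mul, Nat.cast_mul]
  change (T.degDown w : ℝ) * _ = _
  field_simp

def leavesBelow (w : α) : Finset α :=
  T.leaves.filter fun u => T.depth w ≤ T.depth u ∧ T.pathVertex u (T.depth w) = w

theorem mem_leavesBelow {w u : α} :
    u ∈ T.leavesBelow w ↔
      u ∈ T.leaves ∧ T.depth w ≤ T.depth u ∧ T.pathVertex u (T.depth w) = w := by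
  simp [leavesBelow]

theorem leavesBelow_root : T.leavesBelow T.root = T.leaves := by
  ext u
  simp [mem_leavesBelow, T.depth_root, T.pathVertex_zero]

theorem leavesBelow_of_children_eq_empty {w : α} (hw : T.children w = ∅) :
    T.leavesBelow w = {w} := by
  ext u
  rw [T.mem_leavesBelow, Finset.mem_singleton]
  constructor
  · rintro ⟨-, hd, hp⟩
    obtain he | hlt := hd.eq_or_lt
    · rwa [he, T.pathVertex_depth] at hp
    · have := T.pathVertex_succ_mem_children hlt
      rw [hp, hw] at this
      simp at this
  · rintro rfl
    exact ⟨by simp [leaves, hw], le_rfl, T.pathVertex_depth u⟩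

theorem leavesBelow_eq_biUnion_children {w : α} (hw : (T.children w).Nonempty) :
    T.leavesBelow w = (T.children w).biUnion T.leavesBelow := by
  ext u
  simp only [Finset.mem_biUnion, mem_leavesBelow]
  constructor
  · rintro ⟨hu, hd, hp⟩
    have hlt : T.depth w < T.depth u := by
      refine hd.lt_of_ne fun he => ?_
      rw [he, T.pathVertex_depth] at hp
      subst hp
      simp [leaves, hw.ne_empty] at hu
    have hc := T.pathVertex_succ_mem_children hlt
    rw [hp] at hc
    refine ⟨_, hc, hu, ?_, ?_⟩ <;> rw [T.depth_pathVertex hlt]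
    exact hlt
  · rintro ⟨c, hc, hu, hd, hp⟩
    have hdc := T.depth_of_mem_children hc
    refine ⟨hu, by omega, ?_⟩
    rw [← T.parent_pathVertex_succ (by omega), ← hdc, hp, ((T.mem_children).1 hc).1]

theorem pairwiseDisjoint_leavesBelow_children (w : α) :
    (T.children w : Set α).PairwiseDisjoint T.leavesBelow := by
  intro c hc c' hc' hne
  refine Finset.disjoint_left.2 fun u hu hu' => hne ?_
  rw [mem_leavesBelow, T.depth_of_mem_children hc] at hu
  rw [mem_leavesBelow, T.depth_of_mem_children hc'] at hu'
  exact hu.2.2.symm.trans hu'.2.2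

theorem sum_leavesBelow_inv_mweight (w : α) :
    ∑ u ∈ T.leavesBelow w, (T.mweight u : ℝ)⁻¹ = (T.mweight w : ℝ)⁻¹ := by
  induction hn : Finset.univ.sup T.depth - T.depth w using Nat.strong_induction_on
    generalizing w with
  | _ n ih =>
  rcases (T.children w).eq_empty_or_nonempty with hw | hw
  · rw [T.leavesBelow_of_children_eq_empty hw, Finset.sum_singleton]
  · rw [T.leavesBelow_eq_biUnion_children hw,
      Finset.sum_biUnion (T.pairwiseDisjoint_leavesBelow_children w),
      ← T.sum_children_inv_mweight hw]
    refine Finset.sum_congr rfl fun c hc => ih _ ?_ c rfl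
    have := T.depth_of_mem_children hc
    have := Finset.le_sup (f := T.depth) (Finset.mem_univ c)
    omega

theorem sum_leaves_inv_mweight : ∑ u ∈ T.leaves, (T.mweight u : ℝ)⁻¹ = 1 := by
  rw [← T.leavesBelow_root, T.sum_leavesBelow_inv_mweight, mweight, T.depth_root]
  simp

theorem mem_leavesBelow_pathVertex_lcaDepth (u : α) {v : α} (hv : v ∈ T.leaves) :
    v ∈ T.leavesBelow (T.pathVertex u (T.lcaDepth u v)) := by
  rw [mem_leavesBelow, T.depth_pathVertex (T.lcaDepth_le_left u v)]
  exact ⟨hv, T.lcaDepth_le_right u v, (T.pathVertex_lcaDepth u v).symm⟩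

theorem sum_lcaDepth_eq_mweightLCA_rpow_mul_inv_le (u : α) {h : ℕ} (hh : h ≤ T.depth u) :
    ∑ v ∈ T.leaves with T.lcaDepth u v = h,
        (T.mweightLCA u v : ℝ) ^ (1 / 8 : ℝ) * (T.mweight v : ℝ)⁻¹ ≤
      ∏ i ∈ Finset.range h, (T.degDown (T.pathVertex u i) : ℝ) ^ (-(7 / 8 : ℝ)) := by
  set w := T.pathVertex u h
  have hw : (0 : ℝ) < T.mweight w := by exact_mod_cast T.mweight_pos w
  have hbelow : ∑ v ∈ T.leaves with T.lcaDepth u v = h, (T.mweight v : ℝ)⁻¹ ≤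
      (T.mweight w : ℝ)⁻¹ := by
    rw [← T.sum_leavesBelow_inv_mweight]
    refine Finset.sum_le_sum_of_subset_of_nonneg (fun v hv => ?_) fun _ _ _ => by positivity
    rw [Finset.mem_filter] at hv
    simpa only [w, ← hv.2] using T.mem_leavesBelow_pathVertex_lcaDepth u hv.1
  calc ∑ v ∈ T.leaves with T.lcaDepth u v = h,
        (T.mweightLCA u v : ℝ) ^ (1 / 8 : ℝ) * (T.mweight v : ℝ)⁻¹
      = (T.mweight w : ℝ) ^ (1 / 8 : ℝ) *
          ∑ v ∈ T.leaves with T.lcaDepth u v = h, (T.mweight v : ℝ)⁻¹ := by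
        rw [Finset.mul_sum]
        refine Finset.sum_congr rfl fun v hv => ?_
        rw [T.mweightLCA_eq_mweight_pathVertex, (Finset.mem_filter.1 hv).2]
    _ ≤ (T.mweight w : ℝ) ^ (1 / 8 : ℝ) * (T.mweight w : ℝ)⁻¹ := by gcongr
    _ = (T.mweight w : ℝ) ^ (-(7 / 8 : ℝ)) := by
        rw [← Real.rpow_neg_one, ← Real.rpow_add hw]
        norm_num
    _ = ∏ i ∈ Finset.range h, (T.degDown (T.pathVertex u i) : ℝ) ^ (-(7 / 8 : ℝ)) := by
        rw [T.mweight_pathVertex hh, Nat.cast_prod,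
          Real.finsetProd_rpow _ _ fun _ _ => Nat.cast_nonneg _]

theorem sum_mweightLCA_rpow_mul_inv_le (u : α) :
    ∑ v ∈ T.leaves, (T.mweightLCA u v : ℝ) ^ (1 / 8 : ℝ) * (T.mweight v : ℝ)⁻¹ ≤
      ∑ h ∈ Finset.range (T.depth u + 1),
        ∏ i ∈ Finset.range h, (T.degDown (T.pathVertex u i) : ℝ) ^ (-(7 / 8 : ℝ)) := by
  rw [← Finset.sum_fiberwise_of_maps_to (g := T.lcaDepth u)
    fun v _ => Finset.mem_range.2 (Nat.lt_succ_of_le (T.lcaDepth_le_left u v))]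
  exact Finset.sum_le_sum fun h hh =>
    T.sum_lcaDepth_eq_mweightLCA_rpow_mul_inv_le u (Nat.le_of_lt_succ (Finset.mem_range.1 hh))

theorem half_le_sum_mweight_rpow_mul (p : α → ℝ)
    (hp : ∀ v ∈ T.leaves, (1 / 2 : ℝ) * (T.mweight v : ℝ) ^ (-(7 / 8 : ℝ)) ≤ p v) :
    (1 / 2 : ℝ) ≤ ∑ u ∈ T.leaves, (T.mweight u : ℝ) ^ (-(1 / 8 : ℝ)) * p u :=
  calc (1 / 2 : ℝ) = ∑ u ∈ T.leaves, (T.mweight u : ℝ) ^ (-(1 / 8 : ℝ)) *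
        ((1 / 2 : ℝ) * (T.mweight u : ℝ) ^ (-(7 / 8 : ℝ))) := by
        simp_rw [mul_left_comm _ (1 / 2 : ℝ), rpow_neg_one_eighth_mul_rpow_neg_seven_eighths
          (Nat.cast_nonneg _), ← Finset.mul_sum, T.sum_leaves_inv_mweight, mul_one]
    _ ≤ ∑ u ∈ T.leaves, (T.mweight u : ℝ) ^ (-(1 / 8 : ℝ)) * p u := by
        gcongr with u hu
        exact hp u hu

theorem sum_sum_mweight_rpow_mul_le_two (q : α → α → ℝ)
    (hq : ∀ u ∈ T.leaves, ∀ v ∈ T.leaves, q u v ≤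
      (T.mweightLCA u v : ℝ) ^ (1 / 8 : ℝ) *
        ((T.mweight u : ℝ) * (T.mweight v : ℝ)) ^ (-(7 / 8 : ℝ)))
    (h3 : ∀ u ∈ T.leaves, ∑ h ∈ Finset.range (T.depth u + 1),
      ∏ i ∈ Finset.range h, (T.degDown (T.pathVertex u i) : ℝ) ^ (-(7 / 8 : ℝ)) ≤ 2) :
    ∑ u ∈ T.leaves, ∑ v ∈ T.leaves,
      (T.mweight u : ℝ) ^ (-(1 / 8 : ℝ)) * (T.mweight v : ℝ) ^ (-(1 / 8 : ℝ)) * q u v ≤ 2 :=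
  calc _ ≤ ∑ u ∈ T.leaves, (T.mweight u : ℝ)⁻¹ *
        ∑ v ∈ T.leaves, (T.mweightLCA u v : ℝ) ^ (1 / 8 : ℝ) * (T.mweight v : ℝ)⁻¹ := by
        refine Finset.sum_le_sum fun u hu => ?_
        rw [Finset.mul_sum]
        refine Finset.sum_le_sum fun v hv => ?_
        calc _ ≤ (T.mweight u : ℝ) ^ (-(1 / 8 : ℝ)) * (T.mweight v : ℝ) ^ (-(1 / 8 : ℝ)) *
              ((T.mweightLCA u v : ℝ) ^ (1 / 8 : ℝ) *
                ((T.mweight u : ℝ) * (T.mweight v : ℝ)) ^ (-(7 / 8 : ℝ))) := by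
              gcongr
              exact hq u hu v hv
          _ = _ := by
              rw [Real.mul_rpow (Nat.cast_nonneg _) (Nat.cast_nonneg _),
                ← rpow_neg_one_eighth_mul_rpow_neg_seven_eighths (Nat.cast_nonneg (T.mweight u)),
                ← rpow_neg_one_eighth_mul_rpow_neg_seven_eighths (Nat.cast_nonneg (T.mweight v))]
              ring
    _ ≤ ∑ u ∈ T.leaves, (T.mweight u : ℝ)⁻¹ * 2 := by
        gcongr with u hu
        exact (T.sum_mweightLCA_rpow_mul_inv_le u).trans (h3 u hu)
    _ = 2 := by rw [← Finset.sum_mul, T.sum_leaves_inv_mweight, one_mul]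

end FiniteRootedTree

/-- Second moment percolation bound on trees: if the leaf events `E_v` satisfy
`P(E_v) ≥ (1/2)m_v^{−7/8}`, `P(E_u ∩ E_v) ≤ m_{uv}^{1/8}(m_u m_v)^{−7/8}`, and
`Σ_{h=0}^{h_u} Π_{i<h} deg↓(f_u(i))^{−7/8} ≤ 2` for every leaf `u`, then
`P(⋃_v E_v) ≥ 1/8`. -/
theorem tree_percolation {Ω : Type*} [MeasurableSpace Ω]
    (T : FiniteRootedTree α) (μ : Measure Ω) [IsProbabilityMeasure μ]
    (E : α → Set Ω) (hE : ∀ v, MeasurableSet (E v))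
    (h1 : ∀ v ∈ T.leaves,
      (1 / 2 : ℝ) * (T.mweight v : ℝ) ^ (-(7 / 8 : ℝ)) ≤ (μ (E v)).toReal)
    (h2 : ∀ u ∈ T.leaves, ∀ v ∈ T.leaves,
      (μ (E u ∩ E v)).toReal ≤
        (T.mweightLCA u v : ℝ) ^ ((1 / 8 : ℝ)) *
          ((T.mweight u : ℝ) * (T.mweight v : ℝ)) ^ (-(7 / 8 : ℝ)))
    (h3 : ∀ u ∈ T.leaves,
      ∑ h ∈ Finset.range (T.depth u + 1),
        ∏ i ∈ Finset.range h, (T.degDown (T.pathVertex u i) : ℝ) ^ (-(7 / 8 : ℝ)) ≤ 2) :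
    (1 / 8 : ℝ) ≤ (μ (⋃ v ∈ T.leaves, E v)).toReal := by
  have hfirst := T.half_le_sum_mweight_rpow_mul (fun v => μ.real (E v))
    fun v hv => by simpa only [measureReal_def] using h1 v hv
  have hsecond := T.sum_sum_mweight_rpow_mul_le_two (fun u v => μ.real (E u ∩ E v))
    (fun u hu v hv => by simpa only [measureReal_def] using h2 u hu v hv) h3
  have hmoment := sq_sum_mul_measureReal_le μ T.leaves hE
    fun u => (T.mweight u : ℝ) ^ (-(1 / 8 : ℝ))
  rw [← measureReal_def]
  nlinarith [measureReal_nonneg (μ := μ) (s := ⋃ v ∈ T.leaves, E v)]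
end

section
/- Suppose X is a metric space, r ≥ 4, C ≥ 1, and (T,s) is an r-separated tree in X with root z such that val_r(T,s) ≥ 4C·r^{s(z)+1}. Then there exists a C-regular r-separated tree (T',s') in X with (1/2)·val_r(T,s) ≤ val_r(T',s') ≤ val_r(T,s). -/
/-- `w` lies in the subtree rooted at `u` (w.r.t. the parent function). -/
def IsDescendant {ι : Type*} (parent : ι → ι) (u w : ι) : Prop :=
  ∃ k : ℕ, parent^[k] w = u

/-- An `r`-separated tree in a metric space `X`: a finite rooted tree with vertices placed
in `X` and integer labels `s` such that (1) labels drop by at least 2 along edges;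
(2) the subtrees of distinct children of `x` are `(1/2)r^{s(x)−1}`-separated from each
other and from `x`; (3) the subtree of `x` has diameter at most `4r^{s(x)}`. -/
structure SeparatedTree (X : Type*) [MetricSpace X] (r : ℝ) where
  ι : Type
  fintypeι : Fintype ι
  decEqι : DecidableEq ι
  pos : ι → X
  root : ι
  parent : ι → ι
  depth : ι → ℕ
  s : ι → ℤ
  depth_root : depth root = 0
  parent_depth : ∀ v, v ≠ root → depth (parent v) + 1 = depth v
  root_of_depth_zero : ∀ v, depth v = 0 → v = root
  label_decrease : ∀ v, v ≠ root → s v ≤ s (parent v) - 2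
  sep_parent : ∀ x u w, u ≠ root → parent u = x → IsDescendant parent u w →
    (1 / 2) * r ^ (s x - 1) ≤ dist (pos x) (pos w)
  sep_siblings : ∀ x u u' w w', u ≠ root → u' ≠ root → parent u = x → parent u' = x →
    u ≠ u' → IsDescendant parent u w → IsDescendant parent u' w' →
    (1 / 2) * r ^ (s x - 1) ≤ dist (pos w) (pos w')
  diam_subtree : ∀ x w w', IsDescendant parent x w → IsDescendant parent x w' →
    dist (pos w) (pos w') ≤ 4 * r ^ (s x)

attribute [instance] SeparatedTree.fintypeι SeparatedTree.decEqι

variable {X : Type*} [MetricSpace X] {r : ℝ}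

/-- The set of children of a vertex. -/
def SeparatedTree.children (T : SeparatedTree X r) (v : T.ι) : Finset T.ι :=
  Finset.univ.filter fun u => T.parent u = v ∧ u ≠ T.root

/-- `Δ(v)` = number of children of `v`, plus one. -/
def SeparatedTree.Δ (T : SeparatedTree X r) (v : T.ι) : ℕ := (T.children v).card + 1

/-- A leaf is a vertex with no children. -/
def SeparatedTree.IsLeaf (T : SeparatedTree X r) (v : T.ι) : Prop := T.children v = ∅

/-- The vertex at depth `k` on the root-to-`ℓ` path. -/
def SeparatedTree.pathVertex (T : SeparatedTree X r) (ℓ : T.ι) (k : ℕ) : T.ι :=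
  T.parent^[T.depth ℓ - k] ℓ

/-- `val_r(T,s)` = inf over leaves `ℓ` of `Σ_{v on root-to-ℓ path} r^{s(v)} √(log Δ(v))`. -/
noncomputable def SeparatedTree.val (T : SeparatedTree X r) : ℝ :=
  sInf {t : ℝ | ∃ ℓ : T.ι, T.IsLeaf ℓ ∧
    t = ∑ k ∈ Finset.range (T.depth ℓ + 1),
      r ^ (T.s (T.pathVertex ℓ k)) * Real.sqrt (Real.log (T.Δ (T.pathVertex ℓ k)))}

/-- `C`-regularity: every non-leaf `v` satisfies `Δ(v) ≥ exp(C²r²·4^{s(root)−s(v)})`. -/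
def SeparatedTree.Regular (T : SeparatedTree X r) (C : ℝ) : Prop :=
  ∀ v : T.ι, ¬ T.IsLeaf v →
    Real.exp (C ^ 2 * r ^ 2 * (4 : ℝ) ^ (T.s T.root - T.s v)) ≤ (T.Δ v : ℝ)

/-!
At a vertex `v` where the regularity inequality fails, `√(log Δ(v)) < C·r·2^{s(z)−s(v)}`, and
since labels drop by at least `2` per edge and `r ≥ 4` this gives
`r^{s(v)}√(log Δ(v)) ≤ C·r^{s(z)+1}·4^{−depth(v)}`. Hence the non-regular vertices on any
root-to-leaf path contribute at most `(4/3)·C·r^{s(z)+1}` to its sum.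

Fix a leaf `ℓ` realising `val(T)`. The hypothesis forces a regular vertex on the path to `ℓ`; let
`top` be the highest one. Starting from `top`, keep every child of a regular vertex and a single
child of any other vertex (the one towards `ℓ`, if any), and contract each non-regular vertex into
its kept child. Subtrees of the new tree lie inside subtrees of `T`, so separation is inherited;
regular vertices keep their degree and are the only ones that branch, so the new tree is
`C`-regular; each of its root-to-leaf sums is the corresponding sum in `T` minus non-regular terms,
hence at least `val(T) − (4/3)·C·r^{s(z)+1} ≥ val(T)/2`; and `ℓ` survives, so its value is at
most `val(T)`.
-/

lemma IsDescendant.trans {ι : Type*} {p : ι → ι} {u v w : ι} (huv : IsDescendant p u v)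
    (hvw : IsDescendant p v w) : IsDescendant p u w := by
  obtain ⟨a, rfl⟩ := huv
  obtain ⟨b, rfl⟩ := hvw
  exact ⟨a + b, Function.iterate_add_apply p a b w⟩

lemma find_iterate_apply_add_one {α : Type*} [DecidableEq α] {f : α → α} {a : α}
    (h : ∀ x, ∃ k, f^[k] x = a) {x : α} (hx : x ≠ a) :
    Nat.find (h (f x)) + 1 = Nat.find (h x) := by
  have hpos : Nat.find (h x) ≠ 0 := fun h0 => hx (by simpa using (Nat.find_eq_zero (h x)).1 h0)
  obtain ⟨n, hn⟩ := Nat.exists_eq_add_one_of_ne_zero hpos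
  apply le_antisymm
  · have hspec := Nat.find_spec (h x)
    rw [hn, Function.iterate_succ_apply] at hspec
    rw [hn]
    exact Nat.succ_le_succ (Nat.find_min' _ hspec)
  · exact Nat.find_min' _ (by rw [Function.iterate_succ_apply]; exact Nat.find_spec (h (f x)))

lemma sum_quarter_pow_le (s : Finset ℕ) : ∑ j ∈ s, (1 / 4 : ℝ) ^ j ≤ 4 / 3 := by
  calc ∑ j ∈ s, (1 / 4 : ℝ) ^ j ≤ ∑' j, (1 / 4 : ℝ) ^ j :=
        (summable_geometric_of_lt_one (by norm_num) (by norm_num)).sum_le_tsum s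
          fun _ _ => by positivity
    _ = 4 / 3 := by rw [tsum_geometric_of_lt_one (by norm_num) (by norm_num)]; norm_num

namespace SeparatedTree

variable (S : SeparatedTree X r)

@[simp] lemma mem_children {u v : S.ι} : u ∈ S.children v ↔ S.parent u = v ∧ u ≠ S.root := by
  simp [children]

lemma depth_of_mem_children {u v : S.ι} (h : u ∈ S.children v) :
    S.depth u = S.depth v + 1 := by
  obtain ⟨rfl, hu⟩ := (S.mem_children).1 h
  exact (S.parent_depth u hu).symm

lemma not_isLeaf_of_mem_children {u v : S.ι} (h : u ∈ S.children v) : ¬ S.IsLeaf v := by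
  intro hv
  rw [IsLeaf] at hv
  rw [hv] at h
  simp at h

lemma isLeaf_iff_Δ_eq_one {v : S.ι} : S.IsLeaf v ↔ S.Δ v = 1 := by
  simp [IsLeaf, Δ]

lemma ne_root_of_depth_pos {v : S.ι} (h : 0 < S.depth v) : v ≠ S.root := by
  rintro rfl
  simp [S.depth_root] at h

lemma depth_iterate {k : ℕ} {v : S.ι} (h : k ≤ S.depth v) :
    S.depth (S.parent^[k] v) = S.depth v - k := by
  induction k with
  | zero => simp
  | succ k ih =>
    have hk := ih (by omega)
    have := S.parent_depth _ (S.ne_root_of_depth_pos (v := S.parent^[k] v) (by omega))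
    rw [Function.iterate_succ_apply']
    omega

lemma iterate_depth (v : S.ι) : S.parent^[S.depth v] v = S.root :=
  S.root_of_depth_zero _ (by rw [S.depth_iterate le_rfl, Nat.sub_self])

lemma mem_children_iterate {k : ℕ} {v : S.ι} (hk : 0 < k) (hkv : k ≤ S.depth v) :
    S.parent^[k - 1] v ∈ S.children (S.parent^[k] v) := by
  obtain ⟨k, rfl⟩ := Nat.exists_eq_add_one_of_ne_zero hk.ne'
  refine (S.mem_children).2 ⟨by rw [Nat.add_sub_cancel, Function.iterate_succ_apply'], ?_⟩
  exact S.ne_root_of_depth_pos (by rw [S.depth_iterate (by omega)]; omega)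

lemma s_add_le_s_iterate {k : ℕ} {v : S.ι} (h : k ≤ S.depth v) :
    S.s v + 2 * k ≤ S.s (S.parent^[k] v) := by
  induction k with
  | zero => simp
  | succ k ih =>
    have hne : S.parent^[k] v ≠ S.root :=
      S.ne_root_of_depth_pos (by rw [S.depth_iterate (by omega)]; omega)
    have := S.label_decrease _ hne
    have := ih (by omega)
    rw [Function.iterate_succ_apply']
    push_cast
    omega

lemma s_le_s_root (v : S.ι) : S.s v ≤ S.s S.root := by
  have := S.s_add_le_s_iterate (le_refl (S.depth v))
  rw [S.iterate_depth] at this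
  omega

lemma exists_isLeaf : ∃ ℓ : S.ι, S.IsLeaf ℓ := by
  have : Nonempty S.ι := ⟨S.root⟩
  obtain ⟨ℓ, hℓ⟩ := Finite.exists_max S.depth
  refine ⟨ℓ, Finset.eq_empty_iff_forall_notMem.2 fun u hu => ?_⟩
  have := hℓ u
  rw [S.depth_of_mem_children hu] at this
  omega

lemma exists_isLeaf_iterate (f : S.ι → S.ι) (hf : ∀ v, ¬ S.IsLeaf v → f v ∈ S.children v)
    (v : S.ι) : ∃ n, S.IsLeaf (f^[n] v) := by
  by_contra! h
  have hdepth : ∀ n, S.depth (f^[n] v) = S.depth v + n := by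
    intro n
    induction n with
    | zero => rfl
    | succ n ih => rw [Function.iterate_succ_apply', S.depth_of_mem_children (hf _ (h n)), ih]; rfl
  have : Nonempty S.ι := ⟨S.root⟩
  obtain ⟨w, hw⟩ := Finite.exists_max S.depth
  have := hw (f^[S.depth w + 1] v)
  rw [hdepth] at this
  omega

/-- The bound `k ≤ depth v` matters: `parent root` is unconstrained. -/
def IsAncestor (u v : S.ι) : Prop := ∃ k ≤ S.depth v, S.parent^[k] v = u

variable {S}

lemma isAncestor_iterate {k : ℕ} {v : S.ι} (h : k ≤ S.depth v) :
    S.IsAncestor (S.parent^[k] v) v :=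
  ⟨k, h, rfl⟩

@[refl] lemma IsAncestor.refl (v : S.ι) : S.IsAncestor v v := ⟨0, Nat.zero_le _, rfl⟩

lemma isAncestor_of_mem_children {u v : S.ι} (h : u ∈ S.children v) : S.IsAncestor v u :=
  ⟨1, by rw [S.depth_of_mem_children h]; omega, ((S.mem_children).1 h).1⟩

lemma IsAncestor.trans {u v w : S.ι} (huv : S.IsAncestor u v) (hvw : S.IsAncestor v w) :
    S.IsAncestor u w := by
  obtain ⟨a, ha, rfl⟩ := huv
  obtain ⟨b, hb, rfl⟩ := hvw
  rw [S.depth_iterate hb] at ha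
  exact ⟨a + b, by omega, Function.iterate_add_apply _ a b w⟩

lemma IsAncestor.isDescendant {u v : S.ι} (h : S.IsAncestor u v) : IsDescendant S.parent u v :=
  let ⟨k, _, hk⟩ := h; ⟨k, hk⟩

lemma IsAncestor.depth_le {u v : S.ι} (h : S.IsAncestor u v) : S.depth u ≤ S.depth v := by
  obtain ⟨k, hk, rfl⟩ := h
  rw [S.depth_iterate hk]
  omega

lemma IsAncestor.iterate_eq {u v : S.ι} (h : S.IsAncestor u v) :
    S.parent^[S.depth v - S.depth u] v = u := by
  obtain ⟨k, hk, rfl⟩ := h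
  rw [S.depth_iterate hk, Nat.sub_sub_self hk]

lemma IsAncestor.eq_of_depth_le {u v : S.ι} (h : S.IsAncestor u v) (hd : S.depth v ≤ S.depth u) :
    u = v := by
  rw [← h.iterate_eq, Nat.sub_eq_zero_of_le hd, Function.iterate_zero_apply]

lemma IsAncestor.of_depth_le {u v w : S.ι} (hu : S.IsAncestor u w) (hv : S.IsAncestor v w)
    (hd : S.depth u ≤ S.depth v) : S.IsAncestor u v := by
  refine ⟨S.depth v - S.depth u, Nat.sub_le _ _, ?_⟩
  have := hv.depth_le
  calc S.parent^[S.depth v - S.depth u] v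
      = S.parent^[S.depth v - S.depth u] (S.parent^[S.depth w - S.depth v] w) := by
        rw [hv.iterate_eq]
    _ = S.parent^[S.depth w - S.depth u] w := by
        rw [← Function.iterate_add_apply]
        congr 1
        omega
    _ = u := hu.iterate_eq

lemma IsAncestor.eq_of_depth_eq {u v w : S.ι} (hu : S.IsAncestor u w) (hv : S.IsAncestor v w)
    (hd : S.depth u = S.depth v) : u = v :=
  (hu.of_depth_le hv hd.le).eq_of_depth_le hd.ge

lemma IsAncestor.exists_mem_children {v ℓ : S.ι} (h : S.IsAncestor v ℓ) (hne : v ≠ ℓ) :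
    ∃ c ∈ S.children v, S.IsAncestor c ℓ := by
  have hd : S.depth v < S.depth ℓ := h.depth_le.lt_of_ne fun hd => hne (h.eq_of_depth_le hd.ge)
  have hc := S.mem_children_iterate (k := S.depth ℓ - S.depth v) (v := ℓ) (by omega) (by omega)
  rw [h.iterate_eq] at hc
  exact ⟨_, hc, isAncestor_iterate (by omega)⟩

lemma isAncestor_of_iterate_eq (hroot : S.parent S.root = S.root) {k : ℕ} {u v : S.ι}
    (h : S.parent^[k] v = u) : S.IsAncestor u v := by
  rcases le_total k (S.depth v) with hk | hk
  · exact ⟨k, hk, h⟩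
  · refine ⟨S.depth v, le_rfl, ?_⟩
    rw [← h, ← Nat.sub_add_cancel hk, Function.iterate_add_apply, S.iterate_depth,
      Function.iterate_fixed hroot]

variable (S)

open Classical in
noncomputable def ancestors (v : S.ι) : Finset S.ι := Finset.univ.filter (S.IsAncestor · v)

@[simp] lemma mem_ancestors {u v : S.ι} : u ∈ S.ancestors v ↔ S.IsAncestor u v := by
  simp [ancestors]

lemma depth_injOn_ancestors (ℓ : S.ι) : Set.InjOn S.depth (S.ancestors ℓ) :=
  fun _ hu _ hv hd => IsAncestor.eq_of_depth_eq ((S.mem_ancestors).1 hu) ((S.mem_ancestors).1 hv) hd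

noncomputable def term (v : S.ι) : ℝ := r ^ S.s v * Real.sqrt (Real.log (S.Δ v))

noncomputable def pathSum (ℓ : S.ι) : ℝ :=
  ∑ k ∈ Finset.range (S.depth ℓ + 1), S.term (S.pathVertex ℓ k)

lemma term_nonneg (hr : 0 ≤ r) (v : S.ι) : 0 ≤ S.term v := by
  unfold term
  positivity

lemma pathSum_eq_sum_ancestors (ℓ : S.ι) : S.pathSum ℓ = ∑ v ∈ S.ancestors ℓ, S.term v := by
  refine Finset.sum_nbij' (S.pathVertex ℓ) S.depth ?_ ?_ ?_ ?_ fun _ _ => rfl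
  · intro k _
    exact (S.mem_ancestors).2 (isAncestor_iterate (Nat.sub_le _ _))
  · intro v hv
    exact Finset.mem_range_succ_iff.2 ((S.mem_ancestors).1 hv).depth_le
  · intro k hk
    rw [Finset.mem_range_succ_iff] at hk
    rw [pathVertex, S.depth_iterate (Nat.sub_le _ _)]
    omega
  · intro v hv
    exact ((S.mem_ancestors).1 hv).iterate_eq

lemma leafSums_finite : {t | ∃ ℓ, S.IsLeaf ℓ ∧ t = S.pathSum ℓ}.Finite :=
  (Set.finite_range S.pathSum).subset fun _ ⟨ℓ, _, ht⟩ => ⟨ℓ, ht.symm⟩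

lemma leafSums_nonempty : {t | ∃ ℓ, S.IsLeaf ℓ ∧ t = S.pathSum ℓ}.Nonempty :=
  let ⟨ℓ, hℓ⟩ := S.exists_isLeaf; ⟨_, ℓ, hℓ, rfl⟩

lemma val_le_pathSum {ℓ : S.ι} (h : S.IsLeaf ℓ) : S.val ≤ S.pathSum ℓ :=
  csInf_le S.leafSums_finite.bddBelow ⟨ℓ, h, rfl⟩

lemma le_val {c : ℝ} (h : ∀ ℓ, S.IsLeaf ℓ → c ≤ S.pathSum ℓ) : c ≤ S.val :=
  le_csInf S.leafSums_nonempty fun _ ⟨ℓ, hℓ, ht⟩ => ht ▸ h ℓ hℓ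

lemma exists_isLeaf_pathSum_eq_val : ∃ ℓ, S.IsLeaf ℓ ∧ S.pathSum ℓ = S.val :=
  let ⟨ℓ, hℓ, ht⟩ := S.leafSums_nonempty.csInf_mem S.leafSums_finite; ⟨ℓ, hℓ, ht.symm⟩

lemma exists_next_isAncestor (ℓ : S.ι) :
    ∃ next : S.ι → S.ι, (∀ v, ¬ S.IsLeaf v → next v ∈ S.children v) ∧
      ∀ v, S.IsAncestor v ℓ → v ≠ ℓ → S.IsAncestor (next v) ℓ := by
  classical
  refine ⟨fun v => if h : ∃ c ∈ S.children v, S.IsAncestor c ℓ then h.choose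
    else if h' : (S.children v).Nonempty then h'.choose else v, fun v hv => ?_, fun v hv hne => ?_⟩
  · have hne : (S.children v).Nonempty := Finset.nonempty_iff_ne_empty.2 hv
    dsimp only
    split_ifs with h
    · exact h.choose_spec.1
    · exact hne.choose_spec
  · have h := hv.exists_mem_children hne
    dsimp only
    rw [dif_pos h]
    exact h.choose_spec.2

def RegularAt (C : ℝ) (v : S.ι) : Prop :=
  Real.exp (C ^ 2 * r ^ 2 * (4 : ℝ) ^ (S.s S.root - S.s v)) ≤ (S.Δ v : ℝ)

variable {S}

lemma RegularAt.exp_le_of_le {C : ℝ} {v : S.ι} (h : S.RegularAt C v) {s₀ : ℤ}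
    (hs₀ : s₀ ≤ S.s S.root) : Real.exp (C ^ 2 * r ^ 2 * (4 : ℝ) ^ (s₀ - S.s v)) ≤ (S.Δ v : ℝ) := by
  refine le_trans (Real.exp_le_exp.2 ?_) h
  gcongr
  norm_num

lemma term_le_of_not_regularAt (hr : 4 ≤ r) {C : ℝ} (hC : 0 ≤ C) {v : S.ι}
    (hv : ¬ S.RegularAt C v) :
    S.term v ≤ C * r ^ (S.s S.root + 1) * (1 / 4) ^ S.depth v := by
  have hr0 : 0 < r := by linarith
  obtain ⟨n, hn⟩ : ∃ n : ℕ, S.s S.root - S.s v = n :=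
    Int.eq_ofNat_of_zero_le (by linarith [S.s_le_s_root v])
  have hdepth : 2 * S.depth v ≤ n := by
    have := S.s_add_le_s_iterate (le_refl (S.depth v))
    rw [S.iterate_depth] at this
    omega
  have hΔ : (0 : ℝ) < S.Δ v := by unfold Δ; positivity
  have hsqrt : Real.sqrt (Real.log (S.Δ v)) ≤ C * r * 2 ^ n := by
    rw [RegularAt, not_le, hn, zpow_natCast, ← Real.log_lt_iff_lt_exp hΔ] at hv
    refine Real.sqrt_le_iff.2 ⟨by positivity, hv.le.trans (le_of_eq ?_)⟩
    rw [show (4 : ℝ) = 2 ^ 2 by norm_num, ← pow_mul]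
    ring
  have hs : r ^ S.s v = r ^ S.s S.root / r ^ n := by
    rw [← zpow_natCast, ← hn, ← zpow_sub₀ hr0.ne', sub_sub_cancel]
  have hratio : (2 / r) ^ n ≤ (1 / 4 : ℝ) ^ S.depth v :=
    calc (2 / r) ^ n ≤ (1 / 2 : ℝ) ^ n :=
          pow_le_pow_left₀ (by positivity) (by rw [div_le_div_iff₀ hr0 two_pos]; linarith) n
      _ ≤ (1 / 2 : ℝ) ^ (2 * S.depth v) := pow_le_pow_of_le_one (by norm_num) (by norm_num) hdepth
      _ = (1 / 4 : ℝ) ^ S.depth v := by rw [pow_mul]; norm_num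
  calc S.term v ≤ r ^ S.s v * (C * r * 2 ^ n) := by unfold term; gcongr
    _ = C * r ^ (S.s S.root + 1) * (2 / r) ^ n := by
        rw [hs, zpow_add_one₀ hr0.ne', div_pow]
        field_simp
    _ ≤ C * r ^ (S.s S.root + 1) * (1 / 4) ^ S.depth v := by gcongr

lemma sum_term_le_of_not_regularAt (hr : 4 ≤ r) {C : ℝ} (hC : 0 ≤ C) {ℓ : S.ι}
    {A : Finset S.ι} (hA : A ⊆ S.ancestors ℓ) (hreg : ∀ v ∈ A, ¬ S.RegularAt C v) :
    ∑ v ∈ A, S.term v ≤ 4 / 3 * (C * r ^ (S.s S.root + 1)) := by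
  have hK : 0 ≤ C * r ^ (S.s S.root + 1) := by
    have : 0 < r := by linarith
    positivity
  calc ∑ v ∈ A, S.term v ≤ ∑ v ∈ A, C * r ^ (S.s S.root + 1) * (1 / 4) ^ S.depth v :=
        Finset.sum_le_sum fun v hv => S.term_le_of_not_regularAt hr hC (hreg v hv)
    _ = C * r ^ (S.s S.root + 1) * ∑ j ∈ A.image S.depth, (1 / 4 : ℝ) ^ j := by
        rw [Finset.sum_image ((S.depth_injOn_ancestors ℓ).mono hA), Finset.mul_sum]
    _ ≤ 4 / 3 * (C * r ^ (S.s S.root + 1)) := by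
        rw [mul_comm]
        exact mul_le_mul_of_nonneg_right (sum_quarter_pow_le _) hK

lemma exists_regularAt_isAncestor (hr : 4 ≤ r) {C : ℝ} (hC : 0 < C) {ℓ : S.ι}
    (hℓ : 4 * C * r ^ (S.s S.root + 1) ≤ S.pathSum ℓ) :
    ∃ z, S.IsAncestor z ℓ ∧ S.RegularAt C z ∧
      ∀ v, S.IsAncestor v z → v ≠ z → ¬ S.RegularAt C v := by
  classical
  have hK : 0 < C * r ^ (S.s S.root + 1) := by
    have : 0 < r := by linarith
    positivity
  have hA : ((S.ancestors ℓ).filter (S.RegularAt C)).Nonempty := by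
    by_contra hA
    rw [Finset.not_nonempty_iff_eq_empty, Finset.filter_eq_empty_iff] at hA
    have := S.sum_term_le_of_not_regularAt hr hC.le subset_rfl hA
    rw [← pathSum_eq_sum_ancestors] at this
    linarith
  obtain ⟨z, hz, hmin⟩ := Finset.exists_min_image _ S.depth hA
  rw [Finset.mem_filter, mem_ancestors] at hz
  refine ⟨z, hz.1, hz.2, fun v hvz hne hv => hne (hvz.eq_of_depth_le ?_)⟩
  exact hmin v (Finset.mem_filter.2 ⟨(S.mem_ancestors).2 (hvz.trans hz.1), hv⟩)

/-- Pruning data for `S`: a branch vertex keeps all its children, any other vertex keeps only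
the child `next`; the tree grown this way from the branch vertex `top` is then contracted onto
its branch vertices and leaves (see `Contraction.tree`). -/
structure Contraction (S : SeparatedTree X r) where
  IsBranch : S.ι → Prop
  next : S.ι → S.ι
  top : S.ι
  next_mem_children : ∀ v, ¬ S.IsLeaf v → next v ∈ S.children v
  isBranch_top : IsBranch top

namespace Contraction

variable {S : SeparatedTree X r} (D : S.Contraction)

def KeptEdge (u v : S.ι) : Prop := v ∈ S.children u ∧ (D.IsBranch u ∨ v = D.next u)

def Kept (v : S.ι) : Prop := Relation.ReflTransGen D.KeptEdge D.top v

def IsVertex (v : S.ι) : Prop := D.Kept v ∧ (D.IsBranch v ∨ S.IsLeaf v)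

variable {D}

lemma Kept.isAncestor_top {v : S.ι} (h : D.Kept v) : S.IsAncestor D.top v := by
  induction h with
  | refl => exact .refl _
  | tail _ e ih => exact ih.trans (isAncestor_of_mem_children e.1)

lemma Kept.depth_top_le {v : S.ι} (h : D.Kept v) : S.depth D.top ≤ S.depth v :=
  h.isAncestor_top.depth_le

lemma Kept.depth_top_lt {v : S.ι} (h : D.Kept v) (hne : v ≠ D.top) :
    S.depth D.top < S.depth v :=
  h.depth_top_le.lt_of_ne fun hd => hne (h.isAncestor_top.eq_of_depth_le hd.ge).symm

lemma Kept.parent {v : S.ι} (h : D.Kept v) (hne : v ≠ D.top) :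
    D.Kept (S.parent v) ∧ D.KeptEdge (S.parent v) v := by
  obtain rfl | ⟨u, hu, e⟩ := Relation.ReflTransGen.cases_tail h
  · exact absurd rfl hne
  · rw [((S.mem_children).1 e.1).1]
    exact ⟨hu, e⟩

lemma Kept.iterate {v : S.ι} (h : D.Kept v) {k : ℕ} (hk : k ≤ S.depth v - S.depth D.top) :
    D.Kept (S.parent^[k] v) := by
  induction k with
  | zero => exact h
  | succ k ih =>
    have hne : S.parent^[k] v ≠ D.top := fun heq => by
      have := S.depth_iterate (k := k) (v := v) (by omega)
      rw [heq] at this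
      omega
    rw [Function.iterate_succ_apply']
    exact ((ih (by omega)).parent hne).1

lemma Kept.next_iterate {v : S.ι} (h : D.Kept v) {n : ℕ}
    (hn : ∀ i < n, ¬ S.IsLeaf (D.next^[i] v)) : D.Kept (D.next^[n] v) := by
  induction n with
  | zero => exact h
  | succ n ih =>
    rw [Function.iterate_succ_apply']
    have hl := hn n n.lt_succ_self
    exact (ih fun i hi => hn i (by omega)).tail ⟨D.next_mem_children _ hl, Or.inr rfl⟩

/-- Walking up from a kept vertex through non-branch vertices, every kept edge is a `next` edge,
so the walk is undone by iterating `next`. -/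
lemma Kept.next_iterate_parent_iterate {v : S.ι} (h : D.Kept v) {i : ℕ}
    (hi : i ≤ S.depth v - S.depth D.top) (hb : ∀ j, 0 < j → j ≤ i → ¬ D.IsBranch (S.parent^[j] v)) :
    D.next^[i] (S.parent^[i] v) = v := by
  induction i generalizing v with
  | zero => rfl
  | succ i ih =>
    have hne : v ≠ D.top := fun heq => by rw [heq] at hi; omega
    obtain ⟨hp, e⟩ := h.parent hne
    have hnext : D.next (S.parent v) = v :=
      (e.2.resolve_left (by simpa using hb 1 one_pos (by omega))).symm
    have hdp := S.parent_depth v (fun hr => by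
      have := h.depth_top_lt hne; rw [hr, S.depth_root] at this; omega)
    rw [Function.iterate_succ_apply S.parent, Function.iterate_succ_apply' D.next,
      ih hp (by omega) fun j hj hji => by
        rw [← Function.iterate_succ_apply]; exact hb (j + 1) (by omega) (by omega),
      hnext]

variable (D)

lemma parent_iterate_next_iterate {c : S.ι} {n : ℕ} (hn : ∀ i < n, ¬ S.IsLeaf (D.next^[i] c))
    {j : ℕ} (hj : j ≤ n) : S.parent^[j] (D.next^[n] c) = D.next^[n - j] c := by
  induction n generalizing j with
  | zero => obtain rfl : j = 0 := by omega
            rfl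
  | succ n ih =>
    rcases j with _ | j
    · rfl
    · rw [Function.iterate_succ_apply, Function.iterate_succ_apply',
        ((S.mem_children).1 (D.next_mem_children _ (hn n n.lt_succ_self))).1,
        ih (fun i hi => hn i (by omega)) (by omega), Nat.add_sub_add_right]

lemma depth_next_iterate {c : S.ι} {n : ℕ} (hn : ∀ i < n, ¬ S.IsLeaf (D.next^[i] c)) :
    S.depth (D.next^[n] c) = S.depth c + n := by
  induction n with
  | zero => rfl
  | succ n ih =>
    rw [Function.iterate_succ_apply',
      S.depth_of_mem_children (D.next_mem_children _ (hn n n.lt_succ_self)),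
      ih fun i hi => hn i (by omega)]
    rfl

open Classical in
noncomputable def ascent (v : S.ι) : ℕ :=
  if h : ∃ n, 0 < n ∧ n ≤ S.depth v - S.depth D.top ∧ D.IsBranch (S.parent^[n] v) then
    Nat.find h else 0

lemma ascent_le (v : S.ι) : D.ascent v ≤ S.depth v - S.depth D.top := by
  classical
  unfold ascent
  split_ifs with h
  · exact (Nat.find_spec h).2.1
  · exact Nat.zero_le _

lemma ascent_top : D.ascent D.top = 0 :=
  Nat.le_zero.1 ((D.ascent_le _).trans (Nat.sub_self _).le)

variable {D}

lemma ascent_spec {v : S.ι} (hv : D.Kept v) (hne : v ≠ D.top) :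
    0 < D.ascent v ∧ D.IsBranch (S.parent^[D.ascent v] v) := by
  classical
  have h : ∃ n, 0 < n ∧ n ≤ S.depth v - S.depth D.top ∧ D.IsBranch (S.parent^[n] v) :=
    ⟨_, by have := hv.depth_top_lt hne; omega, le_rfl, by
      rw [hv.isAncestor_top.iterate_eq]; exact D.isBranch_top⟩
  rw [ascent, dif_pos h]
  exact ⟨(Nat.find_spec h).1, (Nat.find_spec h).2.2⟩

lemma not_isBranch_of_lt_ascent {v : S.ι} {i : ℕ} (h0 : 0 < i) (hi : i < D.ascent v) :
    ¬ D.IsBranch (S.parent^[i] v) := by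
  classical
  have hle := D.ascent_le v
  unfold ascent at hi hle
  split_ifs at hi hle with h
  · exact fun hb => Nat.find_min h hi ⟨h0, by omega, hb⟩
  · omega

lemma ascent_eq {v : S.ι} {n : ℕ} (h0 : 0 < n) (hn : n ≤ S.depth v - S.depth D.top)
    (hb : D.IsBranch (S.parent^[n] v)) (hmin : ∀ i, 0 < i → i < n → ¬ D.IsBranch (S.parent^[i] v)) :
    D.ascent v = n := by
  classical
  have h : ∃ n, 0 < n ∧ n ≤ S.depth v - S.depth D.top ∧ D.IsBranch (S.parent^[n] v) :=
    ⟨n, h0, hn, hb⟩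
  rw [ascent, dif_pos h, Nat.find_eq_iff]
  exact ⟨⟨h0, hn, hb⟩, fun i hi ⟨hi0, _, hib⟩ => hmin i hi0 hi hib⟩

variable (D)

noncomputable def contractParent (v : S.ι) : S.ι := S.parent^[D.ascent v] v

noncomputable def childToward (v : S.ι) : S.ι := S.parent^[D.ascent v - 1] v

lemma isAncestor_contractParent (v : S.ι) : S.IsAncestor (D.contractParent v) v :=
  isAncestor_iterate ((D.ascent_le v).trans (Nat.sub_le _ _))

lemma contractParent_top : D.contractParent D.top = D.top := by
  rw [contractParent, D.ascent_top, Function.iterate_zero_apply]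

variable {D}

lemma depth_contractParent_lt {v : S.ι} (hv : D.Kept v) (hne : v ≠ D.top) :
    S.depth (D.contractParent v) < S.depth v := by
  have := (D.ascent_spec hv hne).1
  have := D.ascent_le v
  rw [contractParent, S.depth_iterate (by omega)]
  omega

lemma s_le_s_contractParent {v : S.ι} (hv : D.Kept v) (hne : v ≠ D.top) :
    S.s v ≤ S.s (D.contractParent v) - 2 := by
  have := (D.ascent_spec hv hne).1
  have := S.s_add_le_s_iterate (k := D.ascent v) (v := v) ((D.ascent_le v).trans (Nat.sub_le _ _))
  rw [contractParent]
  omega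

lemma IsVertex.contractParent {v : S.ι} (hv : D.IsVertex v) : D.IsVertex (D.contractParent v) := by
  by_cases hne : v = D.top
  · subst hne
    rwa [D.contractParent_top]
  · exact ⟨hv.1.iterate (D.ascent_le v), Or.inl (D.ascent_spec hv.1 hne).2⟩

lemma childToward_mem_children {v : S.ι} (hv : D.Kept v) (hne : v ≠ D.top) :
    D.childToward v ∈ S.children (D.contractParent v) :=
  S.mem_children_iterate (D.ascent_spec hv hne).1 ((D.ascent_le v).trans (Nat.sub_le _ _))

lemma isDescendant_childToward (v : S.ι) : IsDescendant S.parent (D.childToward v) v :=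
  ⟨_, rfl⟩

/-- Two vertices of the contracted tree entering through the same child `c` both lie on the
`next`-chain from `c` with no vertex of the contracted tree strictly before them, so they agree. -/
lemma eq_of_childToward_eq {u u' : S.ι} (hu : D.IsVertex u) (hu' : D.IsVertex u')
    (hne : u ≠ D.top) (hne' : u' ≠ D.top) (h : D.childToward u = D.childToward u') : u = u' := by
  wlog hle : D.ascent u ≤ D.ascent u' generalizing u u'
  · exact (this hu' hu hne' hne h.symm (le_of_not_ge hle)).symm
  obtain ⟨ha, -⟩ := D.ascent_spec hu.1 hne
  obtain ⟨ha', -⟩ := D.ascent_spec hu'.1 hne'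
  have hle' := D.ascent_le u
  have hle'' := D.ascent_le u'
  obtain ⟨m, hm⟩ := Nat.exists_eq_add_one_of_ne_zero ha.ne'
  obtain ⟨d, hd⟩ := Nat.exists_eq_add_of_le hle
  have hdw : S.depth (S.parent^[d] u') = S.depth u' - d := S.depth_iterate (by omega)
  have hwc : S.parent^[m] (S.parent^[d] u') = D.childToward u' := by
    rw [childToward, ← Function.iterate_add_apply]
    congr 1
    omega
  have hu_eq : D.next^[m] (D.childToward u) = u := by
    rw [childToward, hm, Nat.add_sub_cancel]
    exact hu.1.next_iterate_parent_iterate (by omega) fun j hj hjm =>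
      D.not_isBranch_of_lt_ascent hj (by omega)
  have hw_eq : D.next^[m] (S.parent^[m] (S.parent^[d] u')) = S.parent^[d] u' :=
    (hu'.1.iterate (by omega)).next_iterate_parent_iterate (by omega) fun j hj hjm => by
      rw [← Function.iterate_add_apply]
      exact D.not_isBranch_of_lt_ascent (by omega) (by omega)
  rw [hwc, ← h, hu_eq] at hw_eq
  rcases Nat.eq_zero_or_pos d with hd0 | hd0
  · rw [hw_eq, hd0, Function.iterate_zero_apply]
  · refine absurd hu.2 (not_or.2 ⟨?_, ?_⟩) <;> rw [hw_eq]
    · exact D.not_isBranch_of_lt_ascent hd0 (by omega)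
    · exact S.not_isLeaf_of_mem_children (S.mem_children_iterate hd0 (by omega))

/-- Following `next` from a child `c` of a branch vertex `x` until the first branch vertex or leaf
gives the vertex of the contracted tree that enters through `c`. -/
lemma exists_childToward_eq {x c : S.ι} (hx : D.Kept x) (hb : D.IsBranch x)
    (hc : c ∈ S.children x) :
    ∃ u, D.IsVertex u ∧ u ≠ D.top ∧ D.contractParent u = x ∧ D.childToward u = c := by
  classical
  have hex : ∃ n, D.IsBranch (D.next^[n] c) ∨ S.IsLeaf (D.next^[n] c) :=
    (S.exists_isLeaf_iterate D.next D.next_mem_children c).imp fun _ => Or.inr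
  obtain ⟨n, hn, hmin⟩ : ∃ n, (D.IsBranch (D.next^[n] c) ∨ S.IsLeaf (D.next^[n] c)) ∧
      ∀ i < n, ¬ D.IsBranch (D.next^[i] c) ∧ ¬ S.IsLeaf (D.next^[i] c) :=
    ⟨_, Nat.find_spec hex, fun i hi => not_or.1 (Nat.find_min hex hi)⟩
  have hpar : ∀ j ≤ n, S.parent^[j] (D.next^[n] c) = D.next^[n - j] c :=
    fun j hj => D.parent_iterate_next_iterate (fun i hi => (hmin i hi).2) hj
  have hdepth := D.depth_next_iterate (c := c) (n := n) fun i hi => (hmin i hi).2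
  have hdc := S.depth_of_mem_children hc
  have hxtop := hx.depth_top_le
  have hux : S.parent^[n + 1] (D.next^[n] c) = x := by
    rw [Function.iterate_succ_apply', hpar n le_rfl, Nat.sub_self, Function.iterate_zero_apply]
    exact ((S.mem_children).1 hc).1
  have hasc : D.ascent (D.next^[n] c) = n + 1 :=
    ascent_eq (by omega) (by omega) (by rw [hux]; exact hb) fun i hi0 hi => by
      rw [hpar i (by omega)]
      exact (hmin _ (by omega)).1
  have hkept : D.Kept c := Relation.ReflTransGen.tail hx ⟨hc, Or.inl hb⟩
  refine ⟨D.next^[n] c, ⟨hkept.next_iterate fun i hi => (hmin i hi).2, hn⟩, fun h => ?_, ?_, ?_⟩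
  · rw [h] at hdepth
    omega
  · rw [contractParent, hasc, hux]
  · rw [childToward, hasc, Nat.add_sub_cancel, hpar n le_rfl, Nat.sub_self,
      Function.iterate_zero_apply]

variable (D)

abbrev Vertex : Type := {v : S.ι // D.IsVertex v}

def root' : D.Vertex := ⟨D.top, .refl, Or.inl D.isBranch_top⟩

noncomputable def parent' (v : D.Vertex) : D.Vertex := ⟨D.contractParent v.1, v.2.contractParent⟩

lemma exists_iterate_parent'_eq_root' (v : D.Vertex) : ∃ k, D.parent'^[k] v = D.root' := by
  induction h : S.depth v.1 using Nat.strong_induction_on generalizing v with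
  | _ n ih =>
    by_cases hv : v.1 = D.top
    · exact ⟨0, Subtype.ext hv⟩
    · obtain ⟨k, hk⟩ := ih _ (h ▸ depth_contractParent_lt v.2.1 hv) (D.parent' v) rfl
      exact ⟨k + 1, by rwa [Function.iterate_succ_apply]⟩

lemma isAncestor_val_iterate_parent' (w : D.Vertex) (k : ℕ) :
    S.IsAncestor (D.parent'^[k] w).1 w.1 := by
  induction k with
  | zero => exact .refl _
  | succ k ih =>
    rw [Function.iterate_succ_apply']
    exact (D.isAncestor_contractParent _).trans ih

lemma isDescendant_val {u w : D.Vertex} (h : IsDescendant D.parent' u w) :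
    IsDescendant S.parent u.1 w.1 := by
  obtain ⟨k, rfl⟩ := h
  exact (D.isAncestor_val_iterate_parent' w k).isDescendant

lemma childToward_injective {u u' : D.Vertex} (hu : u ≠ D.root') (hu' : u' ≠ D.root')
    (h : D.childToward u.1 = D.childToward u'.1) : u = u' :=
  Subtype.ext (eq_of_childToward_eq u.2 u'.2 (fun h' => hu (Subtype.ext h'))
    (fun h' => hu' (Subtype.ext h')) h)

noncomputable def tree : SeparatedTree X r where
  ι := D.Vertex
  fintypeι := Fintype.ofFinite _
  decEqι := inferInstance
  pos v := S.pos v.1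
  root := D.root'
  parent := D.parent'
  depth v := Nat.find (D.exists_iterate_parent'_eq_root' v)
  s v := S.s v.1
  depth_root := (Nat.find_eq_zero _).2 rfl
  parent_depth _ hv := find_iterate_apply_add_one _ hv
  root_of_depth_zero _ hv := (Nat.find_eq_zero _).1 hv
  label_decrease v hv := s_le_s_contractParent v.2.1 fun h => hv (Subtype.ext h)
  sep_parent := by
    rintro _ u w hu rfl hd
    have hc := (S.mem_children).1
      (childToward_mem_children u.2.1 fun h => hu (Subtype.ext h))
    exact S.sep_parent _ _ _ hc.2 hc.1
      ((D.isDescendant_childToward u.1).trans (D.isDescendant_val hd))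
  sep_siblings := by
    rintro _ u u' w w' hu hu' rfl hp' hne hd hd'
    have hc := (S.mem_children).1
      (childToward_mem_children u.2.1 fun h => hu (Subtype.ext h))
    have hc' := (S.mem_children).1
      (childToward_mem_children u'.2.1 fun h => hu' (Subtype.ext h))
    rw [show D.contractParent u'.1 = D.contractParent u.1 from congrArg Subtype.val hp'] at hc'
    exact S.sep_siblings _ _ _ _ _ hc.2 hc'.2 hc.1 hc'.1
      (fun h => hne (D.childToward_injective hu hu' h))
      ((D.isDescendant_childToward u.1).trans (D.isDescendant_val hd))
      ((D.isDescendant_childToward u'.1).trans (D.isDescendant_val hd'))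
  diam_subtree x _ _ hd hd' := S.diam_subtree x.1 _ _ (D.isDescendant_val hd) (D.isDescendant_val hd')

lemma mem_children_tree {u x : D.Vertex} :
    u ∈ D.tree.children x ↔ D.contractParent u.1 = x.1 ∧ u.1 ≠ D.top :=
  (D.tree.mem_children (u := u) (v := x)).trans
    (and_congr Subtype.ext_iff (not_congr Subtype.ext_iff))

lemma card_children_tree (x : D.Vertex) : (D.tree.children x).card = (S.children x.1).card := by
  by_cases hb : D.IsBranch x.1
  · refine Finset.card_bij (fun u _ => D.childToward u.1) (fun u hu => ?_) (fun u hu u' hu' h => ?_)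
      fun c hc => ?_
    · obtain ⟨hux, hne⟩ := D.mem_children_tree.1 hu
      exact hux ▸ childToward_mem_children u.2.1 hne
    · exact D.childToward_injective (fun h' => (D.mem_children_tree.1 hu).2 (congrArg Subtype.val h'))
        (fun h' => (D.mem_children_tree.1 hu').2 (congrArg Subtype.val h')) h
    · obtain ⟨u, hu, hne, hux, huc⟩ := exists_childToward_eq x.2.1 hb hc
      exact ⟨⟨u, hu⟩, D.mem_children_tree.2 ⟨hux, hne⟩, huc⟩
  · have hleaf : S.children x.1 = ∅ := x.2.2.resolve_left hb
    rw [hleaf, Finset.card_empty, Finset.card_eq_zero, Finset.eq_empty_iff_forall_notMem]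
    intro u hu
    obtain ⟨hux, hne⟩ := D.mem_children_tree.1 hu
    exact hb (hux ▸ (ascent_spec u.2.1 hne).2)

lemma Δ_tree (x : D.Vertex) : D.tree.Δ x = S.Δ x.1 :=
  congrArg (· + 1) (D.card_children_tree x)

lemma isLeaf_tree_iff {x : D.Vertex} : D.tree.IsLeaf x ↔ S.IsLeaf x.1 :=
  (D.tree.isLeaf_iff_Δ_eq_one (v := x)).trans (by rw [Δ_tree, S.isLeaf_iff_Δ_eq_one])

lemma term_tree (x : D.Vertex) : D.tree.term x = S.term x.1 := by
  change r ^ S.s x.1 * Real.sqrt (Real.log (D.tree.Δ x)) = _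
  rw [Δ_tree]
  rfl

lemma regular_tree {C : ℝ}
    (h : ∀ v, D.IsBranch v → Real.exp (C ^ 2 * r ^ 2 * (4 : ℝ) ^ (S.s D.top - S.s v)) ≤ S.Δ v) :
    D.tree.Regular C := by
  intro (v : D.Vertex) hv
  change Real.exp (C ^ 2 * r ^ 2 * (4 : ℝ) ^ (S.s D.top - S.s v.1)) ≤ (D.tree.Δ v : ℝ)
  rw [Δ_tree]
  exact h v.1 (v.2.2.resolve_right fun hl => hv (D.isLeaf_tree_iff.2 hl))

/-- A vertex of `S` strictly between `w` and `contractParent w` is neither a branch vertex nor a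
leaf. -/
lemma exists_iterate_parent'_eq {u w : D.Vertex} (h : S.IsAncestor u.1 w.1) :
    ∃ k, D.parent'^[k] w = u := by
  induction hw : S.depth w.1 using Nat.strong_induction_on generalizing w with
  | _ n ih =>
    by_cases huw : u = w
    · exact ⟨0, huw.symm⟩
    have hlt : S.depth u.1 < S.depth w.1 :=
      h.depth_le.lt_of_ne fun hd => huw (Subtype.ext (h.eq_of_depth_le hd.ge))
    have hwtop : w.1 ≠ D.top := fun hw => by
      have := u.2.1.depth_top_le
      rw [← hw] at this
      omega
    have hasc := ascent_spec w.2.1 hwtop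
    have hle := D.ascent_le w.1
    rcases lt_or_ge (S.depth w.1 - S.depth u.1) (D.ascent w.1) with ha | ha
    · refine absurd u.2.2 (not_or.2 ⟨?_, ?_⟩) <;> rw [← h.iterate_eq]
      · exact not_isBranch_of_lt_ascent (by omega) ha
      · exact S.not_isLeaf_of_mem_children (S.mem_children_iterate (by omega) (by omega))
    · have hpw : S.depth (D.parent' w).1 = S.depth w.1 - D.ascent w.1 :=
        S.depth_iterate (by omega)
      obtain ⟨k, hk⟩ := ih (S.depth (D.parent' w).1) (by omega) (w := D.parent' w)
        (h.of_depth_le (D.isAncestor_contractParent w.1) (by rw [hpw]; omega)) rfl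
      exact ⟨k + 1, by rwa [Function.iterate_succ_apply]⟩

lemma isAncestor_tree_iff {u w : D.Vertex} : D.tree.IsAncestor u w ↔ S.IsAncestor u.1 w.1 := by
  refine ⟨fun ⟨k, _, hk⟩ => hk ▸ D.isAncestor_val_iterate_parent' w k, fun h => ?_⟩
  obtain ⟨k, hk⟩ := D.exists_iterate_parent'_eq h
  exact isAncestor_of_iterate_eq (Subtype.ext D.contractParent_top) hk

open Classical in
lemma pathSum_eq_pathSum_tree_add (ℓ : D.Vertex) :
    S.pathSum ℓ.1 = D.tree.pathSum ℓ + ∑ v ∈ S.ancestors ℓ.1 with ¬ D.IsVertex v, S.term v := by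
  rw [S.pathSum_eq_sum_ancestors, D.tree.pathSum_eq_sum_ancestors ℓ,
    ← Finset.sum_filter_add_sum_filter_not _ D.IsVertex]
  congr 1
  refine (Finset.sum_bij (fun u _ => u.1) (fun u hu => ?_) (fun u _ u' _ h => Subtype.ext h)
    (fun v hv => ?_) fun u _ => D.term_tree u).symm
  · exact Finset.mem_filter.2
      ⟨(S.mem_ancestors).2 (D.isAncestor_tree_iff.1 ((D.tree.mem_ancestors).1 hu)), u.2⟩
  · obtain ⟨hv, hvD⟩ := Finset.mem_filter.1 hv
    exact ⟨⟨v, hvD⟩, (D.tree.mem_ancestors).2 (D.isAncestor_tree_iff.2 ((S.mem_ancestors).1 hv)),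
      rfl⟩

lemma pathSum_tree_le (hr : 0 ≤ r) (ℓ : D.Vertex) : D.tree.pathSum ℓ ≤ S.pathSum ℓ.1 := by
  classical
  rw [D.pathSum_eq_pathSum_tree_add ℓ]
  exact le_add_of_nonneg_right (Finset.sum_nonneg fun v _ => S.term_nonneg hr v)

variable {D}

lemma not_isBranch_of_isAncestor
    (htop : ∀ v, S.IsAncestor v D.top → v ≠ D.top → ¬ D.IsBranch v) {v w : S.ι}
    (hw : D.IsVertex w) (hv : S.IsAncestor v w) (hvD : ¬ D.IsVertex v) : ¬ D.IsBranch v := by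
  intro hb
  have htw := hw.1.isAncestor_top
  rcases le_or_gt (S.depth D.top) (S.depth v) with hd | hd
  · refine hvD ⟨?_, Or.inl hb⟩
    rw [← hv.iterate_eq]
    exact hw.1.iterate (by omega)
  · exact htop v (hv.of_depth_le htw hd.le) (fun h => by rw [h] at hd; omega) hb

variable (D) in
lemma kept_of_isAncestor {ℓ : S.ι}
    (hnext : ∀ v, S.IsAncestor v ℓ → v ≠ ℓ → S.IsAncestor (D.next v) ℓ) {w : S.ι}
    (htw : S.IsAncestor D.top w) (hwℓ : S.IsAncestor w ℓ) : D.Kept w := by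
  induction hn : S.depth w - S.depth D.top generalizing w with
  | zero =>
    rw [← htw.eq_of_depth_le (by have := htw.depth_le; omega)]
    exact .refl
  | succ n ih =>
    have hw : w ≠ S.root := S.ne_root_of_depth_pos (by omega)
    have hpw := isAncestor_of_mem_children ((S.mem_children).2 ⟨rfl, hw⟩)
    have hdp := S.parent_depth w hw
    have hp : D.Kept (S.parent w) := ih (htw.of_depth_le hpw (by omega)) (hpw.trans hwℓ) (by omega)
    refine hp.tail ⟨(S.mem_children).2 ⟨rfl, hw⟩, Or.inr ?_⟩
    have hpℓ := hpw.trans hwℓ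
    have hc := D.next_mem_children _ (S.not_isLeaf_of_mem_children ((S.mem_children).2 ⟨rfl, hw⟩))
    refine hwℓ.eq_of_depth_eq (hnext _ hpℓ fun h => ?_) (by rw [S.depth_of_mem_children hc]; omega)
    have := hwℓ.depth_le
    rw [← h] at this
    omega


variable (D) in
lemma pathSum_le_pathSum_tree_add (hr : 4 ≤ r) {C : ℝ} (hC : 0 ≤ C)
    (hbranch : ∀ v, S.RegularAt C v → D.IsBranch v)
    (htop : ∀ v, S.IsAncestor v D.top → v ≠ D.top → ¬ D.IsBranch v) (ℓ : D.Vertex) :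
    S.pathSum ℓ.1 ≤ D.tree.pathSum ℓ + 4 / 3 * (C * r ^ (S.s S.root + 1)) := by
  classical
  rw [D.pathSum_eq_pathSum_tree_add ℓ]
  gcongr
  refine S.sum_term_le_of_not_regularAt hr hC (Finset.filter_subset _ _) fun v hv => ?_
  obtain ⟨hvℓ, hvD⟩ := Finset.mem_filter.1 hv
  exact mt (hbranch v) (not_isBranch_of_isAncestor htop ℓ.2 ((S.mem_ancestors).1 hvℓ) hvD)

end Contraction

end SeparatedTree

/-- If `r ≥ 4`, `C ≥ 1`, and `(T,s)` is an `r`-separated tree in `X` with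
`val_r(T,s) ≥ 4C·r^{s(root)+1}`, then there is a `C`-regular `r`-separated tree `(T',s')`
in `X` with `(1/2)·val_r(T,s) ≤ val_r(T',s') ≤ val_r(T,s)`. -/
theorem exists_regular_separated_tree (r C : ℝ) (hr : 4 ≤ r) (hC : 1 ≤ C)
    (T : SeparatedTree X r)
    (hval : 4 * C * r ^ (T.s T.root + 1) ≤ T.val) :
    ∃ T' : SeparatedTree X r, T'.Regular C ∧
      (1 / 2) * T.val ≤ T'.val ∧ T'.val ≤ T.val := by
  obtain ⟨ℓ, hℓ, hℓval⟩ := T.exists_isLeaf_pathSum_eq_val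
  obtain ⟨z, hzℓ, hz, hzmin⟩ :=
    T.exists_regularAt_isAncestor hr (by linarith) (hval.trans_eq hℓval.symm)
  obtain ⟨next, hnext, hnextℓ⟩ := T.exists_next_isAncestor ℓ
  let D : T.Contraction := ⟨T.RegularAt C, next, z, hnext, hz⟩
  have hℓD : D.IsVertex ℓ := ⟨D.kept_of_isAncestor hnextℓ hzℓ (.refl ℓ), Or.inr hℓ⟩
  have hK : 0 ≤ C * r ^ (T.s T.root + 1) := by
    have : 0 < r := by linarith
    positivity
  refine ⟨D.tree, D.regular_tree fun v hv => hv.exp_le_of_le (T.s_le_s_root z), ?_, ?_⟩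
  · refine D.tree.le_val fun ℓ' hℓ' => ?_
    have h₁ := T.val_le_pathSum (D.isLeaf_tree_iff.1 hℓ')
    have h₂ := D.pathSum_le_pathSum_tree_add hr (by linarith) (fun _ => id) hzmin ℓ'
    linarith
  · calc D.tree.val ≤ D.tree.pathSum ⟨ℓ, hℓD⟩ := D.tree.val_le_pathSum (D.isLeaf_tree_iff.2 hℓ)
      _ ≤ T.pathSum ℓ := D.pathSum_tree_le (by linarith) ⟨ℓ, hℓD⟩
      _ = T.val := hℓval
end
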